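/- arXiv:1910.04823 — 7 statements merged into one kernel-verified Lean document; each statement's English description precedes it below -/
import Mathlib

section
/- With the F4 setup as above, for every vector v ∈ ℝ^4, if ⟨v, u·α_s⟩ > 0 and ⟨v, (ptu)·α_s⟩ > 0, then ⟨v, (usp)·α_t⟩ > 0. Consequently, the intersection of the two open halfspaces {v : ⟨v, u·α_s⟩ > 0} and {v : ⟨v, (ptu)·α_s⟩ > 0} is contained in the open halfspace {v : ⟨v, (usp)·α_t⟩ > 0}. -/
open Matrix

/-- The reflection of Euclidean 4-space in the hyperplane orthogonal to the root `α`. -/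
noncomputable def titsRefl (α v : Fin 4 → ℝ) : Fin 4 → ℝ :=
  v - (2 * (v ⬝ᵥ α) / (α ⬝ᵥ α)) • α

/-- Simple root of the generator `u` of F₄. -/
noncomputable def αu : Fin 4 → ℝ := ![1, -1, 0, 0]
/-- Simple root of the generator `s` of F₄. -/
noncomputable def αs : Fin 4 → ℝ := ![0, 1, -1, 0]
/-- Simple root of the generator `t` of F₄. -/
noncomputable def αt : Fin 4 → ℝ := ![0, 0, 1, 0]
/-- Simple root of the generator `p` of F₄. -/
noncomputable def αp : Fin 4 → ℝ := ![-(1/2), -(1/2), -(1/2), -(1/2)]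

/-- For every `v ∈ ℝ⁴`, if `⟨v, u·α_s⟩ > 0` and `⟨v, (ptu)·α_s⟩ > 0` then
`⟨v, (usp)·α_t⟩ > 0`; consequently the intersection of the two open halfspaces
determined by `u·α_s` and `(ptu)·α_s` is contained in the open halfspace
determined by `(usp)·α_t`. -/
theorem f4_halfspace_inclusion :
    (∀ v : Fin 4 → ℝ,
      0 < v ⬝ᵥ titsRefl αu αs →
      0 < v ⬝ᵥ titsRefl αp (titsRefl αt (titsRefl αu αs)) →
      0 < v ⬝ᵥ titsRefl αu (titsRefl αs (titsRefl αp αt))) ∧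
    {v : Fin 4 → ℝ | 0 < v ⬝ᵥ titsRefl αu αs} ∩
        {v : Fin 4 → ℝ | 0 < v ⬝ᵥ titsRefl αp (titsRefl αt (titsRefl αu αs))} ⊆
      {v : Fin 4 → ℝ | 0 < v ⬝ᵥ titsRefl αu (titsRefl αs (titsRefl αp αt))} := by

  have key : ∀ v : Fin 4 → ℝ,
      0 < v ⬝ᵥ titsRefl αu αs →
      0 < v ⬝ᵥ titsRefl αp (titsRefl αt (titsRefl αu αs)) →
      0 < v ⬝ᵥ titsRefl αu (titsRefl αs (titsRefl αp αt)) := by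
    intro v h1 h2
    simp only [titsRefl, αu, αs, αt, αp, dotProduct, Fin.sum_univ_four,
      Pi.sub_apply, Pi.smul_apply, smul_eq_mul, Matrix.cons_val_zero,
      Matrix.cons_val_one, Matrix.head_cons, Matrix.cons_val_two,
      Matrix.tail_cons, Matrix.cons_val_three] at h1 h2 ⊢
    norm_num at h1 h2 ⊢
    linarith
  exact ⟨key, fun v hv => key v hv.1 hv.2⟩
end

section
/- Let Γ be a finite simple graph (the defining graph of a Coxeter system of type FC), let s, t be adjacent vertices with s and t non-commuting, and let r be a vertex such that {s,t,r} does not span a triangle of pairwise-adjacent vertices (i.e., {s,t,r} is not spherical). Suppose s is not good with respect to r and t is not good with respect to r (for L = {s,t}). Then r lies in a connected component of Γ minus ({s,t} ∪ {s,t}^⊥) in which no vertex is adjacent to s or to t. -/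
/-- A Coxeter matrix on the set `S` of generators: symmetric, `1` on the diagonal,
never `1` off the diagonal; the value `0` stands for `∞`. -/
structure CoxMat (S : Type*) where
  m : S → S → ℕ
  symm : ∀ a b, m a b = m b a
  diag : ∀ a, m a a = 1
  offDiag : ∀ a b, a ≠ b → m a b ≠ 1

namespace CoxMat

variable {S : Type*} (C : CoxMat S)

/-- Adjacency in the defining graph: `a ≠ b` and `⟨a,b⟩` is finite (label `≠ ∞`). -/
def Adj (a b : S) : Prop := a ≠ b ∧ C.m a b ≠ 0

/-- `J^⊥`: the elements of `S ∖ J` commuting with every element of `J`. -/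
def perp (J : Set S) : Set S := {a | a ∉ J ∧ ∀ j ∈ J, C.m a j = 2}

/-- For a Coxeter generating set of type FC, a subset is spherical if and only if its
elements are pairwise adjacent in the defining graph. -/
def Spherical (J : Set S) : Prop := J.Pairwise C.Adj

/-- `J` is irreducible: it is not contained in `K ∪ K^⊥` for a non-empty proper `K ⊂ J`. -/
def Irred (J : Set S) : Prop :=
  ∀ K : Set S, K ⊂ J → K.Nonempty → ¬ J ⊆ K ∪ C.perp K

/-- `a` and `b` lie in the same connected component of the subgraph of the defining
graph induced on the complement of `X`. -/
def SameComp (X : Set S) (a b : S) : Prop :=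
  a ∉ X ∧ b ∉ X ∧ Relation.ReflTransGen (fun x y => x ∉ X ∧ y ∉ X ∧ C.Adj x y) a b

/-- The element `t ∈ L` is good with respect to `r`: `r ≠ t`, `r` is not adjacent to `t`,
and `L ∖ (t ∪ t^⊥)` is non-empty and in the same component of `S ∖ (t ∪ t^⊥)` as `r`. -/
def GoodElt (L : Set S) (r t : S) : Prop :=
  r ≠ t ∧ ¬ C.Adj r t ∧ (L \ ({t} ∪ C.perp {t})).Nonempty ∧
    ∀ l ∈ L \ ({t} ∪ C.perp {t}), C.SameComp ({t} ∪ C.perp {t}) l r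

/-- The non-commuting pair `{s,t} ⊆ L` is good with respect to `r`: `{s,t,r}` is not
spherical, and `L ∖ ({s,t} ∪ {s,t}^⊥)` is non-empty and in the same component of
`S ∖ ({s,t} ∪ {s,t}^⊥)` as `r`. -/
def GoodPair (L : Set S) (r s t : S) : Prop :=
  ¬ C.Spherical {s, t, r} ∧ (L \ ({s, t} ∪ C.perp {s, t})).Nonempty ∧
    ∀ l ∈ L \ ({s, t} ∪ C.perp {s, t}), C.SameComp ({s, t} ∪ C.perp {s, t}) l r

/-- `S` is 3-rigid: no irreducible spherical subset of size `≥ 3` weakly separates `S`,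
i.e. for any such `J` the subgraph induced on `S ∖ (J ∪ J^⊥)` is connected (or empty). -/
def ThreeRigid : Prop :=
  ∀ J : Set S, C.Spherical J → C.Irred J → 3 ≤ J.ncard →
    ∀ a b : S, a ∉ J ∪ C.perp J → b ∉ J ∪ C.perp J → C.SameComp (J ∪ C.perp J) a b

/-- `s, t, p` are consecutive vertices in the Coxeter–Dynkin diagram of `L`. -/
def Consecutive (L : Set S) (s t p : S) : Prop :=
  s ∈ L ∧ t ∈ L ∧ p ∈ L ∧ s ≠ t ∧ t ≠ p ∧ s ≠ p ∧
    C.m s t ≠ 2 ∧ C.m t p ≠ 2 ∧ C.m s p = 2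

/-- `L` is exposed: `|L| ≤ 2`, or `|L| = 3` and at least two elements of `L` are
adjacent to no element of `S ∖ (L ∪ L^⊥)`. -/
def Exposed (L : Set S) : Prop :=
  L.ncard ≤ 2 ∨ (L.ncard = 3 ∧ ∃ a ∈ L, ∃ b ∈ L, a ≠ b ∧
    (∀ k, k ∉ L ∪ C.perp L → ¬ C.Adj a k) ∧ (∀ k, k ∉ L ∪ C.perp L → ¬ C.Adj b k))

end CoxMat

/-- If `s` and `t` are adjacent and non-commuting, `{s,t,r}` is not spherical, and
neither `s` nor `t` is good with respect to `r` (for `L = {s,t}`), then `r` lies in a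
component of `S ∖ ({s,t} ∪ {s,t}^⊥)` in which no vertex is adjacent to `s` or to `t`. -/
theorem stnotgood {S : Type*} (C : CoxMat S) (s t r : S)
    (hadj : C.Adj s t) (hnc : C.m s t ≠ 2)
    (hr : ¬ C.Spherical {s, t, r})
    (hs : ¬ C.GoodElt {s, t} r s) (ht : ¬ C.GoodElt {s, t} r t) :
    r ∉ ({s, t} : Set S) ∪ C.perp {s, t} ∧
      ∀ k, C.SameComp (({s, t} : Set S) ∪ C.perp {s, t}) r k →
        ¬ C.Adj k s ∧ ¬ C.Adj k t := by
  classical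
  obtain ⟨hstne, hstm⟩ := hadj
  have adjs : ∀ a b : S, C.Adj a b → C.Adj b a := fun a b h =>
    ⟨h.1.symm, by rw [C.symm]; exact h.2⟩
  have notXs : ∀ a : S, a ∉ ({s} : Set S) ∪ C.perp {s} ↔ a ≠ s ∧ C.m a s ≠ 2 := by
    intro a; simp [CoxMat.perp]; tauto
  have notXt : ∀ a : S, a ∉ ({t} : Set S) ∪ C.perp {t} ↔ a ≠ t ∧ C.m a t ≠ 2 := by
    intro a; simp [CoxMat.perp]; tauto
  have notX : ∀ a : S, a ∉ ({s, t} : Set S) ∪ C.perp {s, t} ↔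
      a ≠ s ∧ a ≠ t ∧ ¬(C.m a s = 2 ∧ C.m a t = 2) := by
    intro a; simp [CoxMat.perp]; tauto
  have mts : C.m t s ≠ 2 := by rw [C.symm]; exact hnc
  have sph : C.Adj r s → C.Adj r t → C.Spherical {s, t, r} := by
    intro h1 h2 x hx y hy hxy
    simp only [Set.mem_insert_iff, Set.mem_singleton_iff] at hx hy
    rcases hx with rfl | rfl | rfl <;> rcases hy with rfl | rfl | rfl <;>
      first
        | exact absurd rfl hxy
        | exact ⟨hstne, hstm⟩
        | exact adjs _ _ ⟨hstne, hstm⟩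
        | exact h1
        | exact h2
        | exact adjs _ _ h1
        | exact adjs _ _ h2
  have hrs : r ≠ s := by
    rintro rfl
    apply hr
    intro x hx y hy hxy
    simp only [Set.mem_insert_iff, Set.mem_singleton_iff] at hx hy
    rcases hx with rfl | rfl | rfl <;> rcases hy with rfl | rfl | rfl <;>
      first
        | exact absurd rfl hxy
        | exact ⟨hstne, hstm⟩
        | exact adjs _ _ ⟨hstne, hstm⟩
  have hrt : r ≠ t := by
    rintro rfl
    apply hr
    intro x hx y hy hxy
    simp only [Set.mem_insert_iff, Set.mem_singleton_iff] at hx hy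
    rcases hx with rfl | rfl | rfl <;> rcases hy with rfl | rfl | rfl <;>
      first
        | exact absurd rfl hxy
        | exact ⟨hstne, hstm⟩
        | exact adjs _ _ ⟨hstne, hstm⟩
  have tnotXs : t ∉ ({s} : Set S) ∪ C.perp {s} := (notXs t).2 ⟨hstne.symm, mts⟩
  have snotXt : s ∉ ({t} : Set S) ∪ C.perp {t} := (notXt s).2 ⟨hstne, hnc⟩
  have tmem : t ∈ ({s, t} : Set S) \ (({s} : Set S) ∪ C.perp {s}) :=
    ⟨Or.inr rfl, tnotXs⟩
  have smem : s ∈ ({s, t} : Set S) \ (({t} : Set S) ∪ C.perp {t}) :=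
    ⟨Or.inl rfl, snotXt⟩
  -- r is not adjacent to t
  have hnart : ¬ C.Adj r t := by
    intro hArt
    have hnars : ¬ C.Adj r s := fun hArs => hr (sph hArs hArt)
    have mrs : C.m r s = 0 := by
      by_contra h; exact hnars ⟨hrs, h⟩
    have rnotXs : r ∉ ({s} : Set S) ∪ C.perp {s} := (notXs r).2 ⟨hrs, by simp [mrs]⟩
    apply hs
    refine ⟨hrs, hnars, ⟨t, tmem⟩, ?_⟩
    intro l hl
    obtain ⟨hl1, hl2⟩ := hl
    have hlt : l = t := by
      rcases hl1 with rfl | rfl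
      · exact absurd (Set.mem_union_left _ rfl) hl2
      · rfl
    subst hlt
    exact ⟨tnotXs, rnotXs, Relation.ReflTransGen.single ⟨tnotXs, rnotXs, adjs _ _ hArt⟩⟩
  have mrt : C.m r t = 0 := by
    by_contra h; exact hnart ⟨hrt, h⟩
  have rnotXt : r ∉ ({t} : Set S) ∪ C.perp {t} := (notXt r).2 ⟨hrt, by simp [mrt]⟩
  -- r is not adjacent to s
  have hnars : ¬ C.Adj r s := by
    intro hArs
    apply ht
    refine ⟨hrt, hnart, ⟨s, smem⟩, ?_⟩
    intro l hl
    obtain ⟨hl1, hl2⟩ := hl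
    have hls : l = s := by
      rcases hl1 with rfl | rfl
      · rfl
      · exact absurd (Set.mem_union_left _ rfl) hl2
    subst hls
    exact ⟨snotXt, rnotXt, Relation.ReflTransGen.single ⟨snotXt, rnotXt, adjs _ _ hArs⟩⟩
  have mrs : C.m r s = 0 := by
    by_contra h; exact hnars ⟨hrs, h⟩
  have rnotXs : r ∉ ({s} : Set S) ∪ C.perp {s} := (notXs r).2 ⟨hrs, by simp [mrs]⟩
  have rnotX : r ∉ ({s, t} : Set S) ∪ C.perp {s, t} :=
    (notX r).2 ⟨hrs, hrt, by simp [mrs]⟩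
  -- extract the non-connectivity facts from ¬GoodElt
  have hnSt : ¬ C.SameComp (({t} : Set S) ∪ C.perp {t}) s r := by
    intro h
    apply ht
    refine ⟨hrt, hnart, ⟨s, smem⟩, ?_⟩
    intro l hl
    obtain ⟨hl1, hl2⟩ := hl
    have hls : l = s := by
      rcases hl1 with rfl | rfl
      · rfl
      · exact absurd (Set.mem_union_left _ rfl) hl2
    subst hls; exact h
  have hnTs : ¬ C.SameComp (({s} : Set S) ∪ C.perp {s}) t r := by
    intro h
    apply hs
    refine ⟨hrs, hnars, ⟨t, tmem⟩, ?_⟩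
    intro l hl
    obtain ⟨hl1, hl2⟩ := hl
    have hlt : l = t := by
      rcases hl1 with rfl | rfl
      · exact absurd (Set.mem_union_left _ rfl) hl2
      · rfl
    subst hlt; exact h
  -- reversal of paths
  have revXs : ∀ a b : S,
      Relation.ReflTransGen (fun x y => x ∉ ({s} : Set S) ∪ C.perp {s} ∧
        y ∉ ({s} : Set S) ∪ C.perp {s} ∧ C.Adj x y) a b →
      Relation.ReflTransGen (fun x y => x ∉ ({s} : Set S) ∪ C.perp {s} ∧
        y ∉ ({s} : Set S) ∪ C.perp {s} ∧ C.Adj x y) b a := fun a b h =>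
    (@Relation.ReflTransGen.stdSymm _ _ ⟨fun x y hxy => ⟨hxy.2.1, hxy.1, adjs _ _ hxy.2.2⟩⟩).symm _ _ h
  have revXt : ∀ a b : S,
      Relation.ReflTransGen (fun x y => x ∉ ({t} : Set S) ∪ C.perp {t} ∧
        y ∉ ({t} : Set S) ∪ C.perp {t} ∧ C.Adj x y) a b →
      Relation.ReflTransGen (fun x y => x ∉ ({t} : Set S) ∪ C.perp {t} ∧
        y ∉ ({t} : Set S) ∪ C.perp {t} ∧ C.Adj x y) b a := fun a b h =>
    (@Relation.ReflTransGen.stdSymm _ _ ⟨fun x y hxy => ⟨hxy.2.1, hxy.1, adjs _ _ hxy.2.2⟩⟩).symm _ _ h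
  -- the key induction along a path in the complement of X
  have key : ∀ k : S,
      Relation.ReflTransGen (fun x y => x ∉ ({s, t} : Set S) ∪ C.perp {s, t} ∧
        y ∉ ({s, t} : Set S) ∪ C.perp {s, t} ∧ C.Adj x y) r k →
      k ∉ ({s} : Set S) ∪ C.perp {s} ∧ k ∉ ({t} : Set S) ∪ C.perp {t} ∧
        Relation.ReflTransGen (fun x y => x ∉ ({s} : Set S) ∪ C.perp {s} ∧
          y ∉ ({s} : Set S) ∪ C.perp {s} ∧ C.Adj x y) r k ∧
        Relation.ReflTransGen (fun x y => x ∉ ({t} : Set S) ∪ C.perp {t} ∧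
          y ∉ ({t} : Set S) ∪ C.perp {t} ∧ C.Adj x y) r k := by
    intro k hk
    induction hk with
    | refl => exact ⟨rnotXs, rnotXt, Relation.ReflTransGen.refl, Relation.ReflTransGen.refl⟩
    | @tail b c hab hbc ih =>
      obtain ⟨hbX, hcX, hAdj⟩ := hbc
      obtain ⟨hbXs, hbXt, pXs, pXt⟩ := ih
      obtain ⟨hcs, hct, hcm⟩ := (notX c).1 hcX
      have hcmt : C.m c t ≠ 2 := by
        intro h2t
        have hcms : C.m c s ≠ 2 := fun h2s => hcm ⟨h2s, h2t⟩
        have hcXs : c ∉ ({s} : Set S) ∪ C.perp {s} := (notXs c).2 ⟨hcs, hcms⟩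
        refine hnTs ⟨tnotXs, rnotXs, Relation.ReflTransGen.head
          ⟨tnotXs, hcXs, ⟨hct.symm, by rw [C.symm, h2t]; simp⟩⟩
          (Relation.ReflTransGen.head ⟨hcXs, hbXs, adjs _ _ hAdj⟩ (revXs _ _ pXs))⟩
      have hcms : C.m c s ≠ 2 := by
        intro h2s
        have hcXt : c ∉ ({t} : Set S) ∪ C.perp {t} := (notXt c).2 ⟨hct, hcmt⟩
        refine hnSt ⟨snotXt, rnotXt, Relation.ReflTransGen.head
          ⟨snotXt, hcXt, ⟨hcs.symm, by rw [C.symm, h2s]; simp⟩⟩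
          (Relation.ReflTransGen.head ⟨hcXt, hbXt, adjs _ _ hAdj⟩ (revXt _ _ pXt))⟩
      have hcXs : c ∉ ({s} : Set S) ∪ C.perp {s} := (notXs c).2 ⟨hcs, hcms⟩
      have hcXt : c ∉ ({t} : Set S) ∪ C.perp {t} := (notXt c).2 ⟨hct, hcmt⟩
      exact ⟨hcXs, hcXt, pXs.tail ⟨hbXs, hcXs, hAdj⟩, pXt.tail ⟨hbXt, hcXt, hAdj⟩⟩
  refine ⟨rnotX, ?_⟩
  intro k hk
  obtain ⟨-, -, p⟩ := hk
  obtain ⟨hkXs, hkXt, pXs, pXt⟩ := key k p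
  constructor
  · intro hks
    exact hnSt ⟨snotXt, rnotXt,
      Relation.ReflTransGen.head ⟨snotXt, hkXt, adjs _ _ hks⟩ (revXt _ _ pXt)⟩
  · intro hkt
    exact hnTs ⟨tnotXs, rnotXs,
      Relation.ReflTransGen.head ⟨tnotXs, hkXs, adjs _ _ hkt⟩ (revXs _ _ pXs)⟩
end

section
/- Let L ⊆ S be irreducible spherical in a Coxeter system of type FC, let {s,t} ⊆ L be a non-commuting pair, and let r ∈ S∖L. If the pair {s,t} is good with respect to r, then s is good with respect to r or t is good with respect to r. -/
private lemma good_pair_aux {S : Type*} (C : CoxMat S) (L : Set S)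
    (hsph : C.Spherical L)
    (s t r : S) (hs : s ∈ L) (ht : t ∈ L) (hst : s ≠ t) (hnc : C.m s t ≠ 2)
    (hrs : r ≠ s) (hrt : r ≠ t) (hns : ¬ C.Adj r s)
    (hne : (L \ ({s, t} ∪ C.perp {s, t})).Nonempty)
    (hconn : ∀ l ∈ L \ ({s, t} ∪ C.perp {s, t}),
      C.SameComp ({s, t} ∪ C.perp {s, t}) l r) :
    C.GoodElt L r s ∨ C.GoodElt L r t := by
  classical
  set Y : Set S := {s, t} ∪ C.perp {s, t} with hYdef
  have hmXs : ∀ a : S, a ∈ ({s} ∪ C.perp {s} : Set S) ↔ (a = s ∨ C.m a s = 2) := by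
    intro a
    simp only [Set.mem_union, Set.mem_singleton_iff, CoxMat.perp, Set.mem_setOf_eq,
      forall_eq]
    tauto
  have hmXt : ∀ a : S, a ∈ ({t} ∪ C.perp {t} : Set S) ↔ (a = t ∨ C.m a t = 2) := by
    intro a
    simp only [Set.mem_union, Set.mem_singleton_iff, CoxMat.perp, Set.mem_setOf_eq,
      forall_eq]
    tauto
  have hmY : ∀ a : S, a ∈ Y ↔ (a = s ∨ a = t ∨ (C.m a s = 2 ∧ C.m a t = 2)) := by
    intro a
    simp only [hYdef, Set.mem_union, Set.mem_insert_iff, Set.mem_singleton_iff,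
      CoxMat.perp, Set.mem_setOf_eq, forall_eq_or_imp, forall_eq]
    tauto
  have adj2 : ∀ a b : S, C.m a b = 2 → C.Adj a b := by
    intro a b h
    refine ⟨?_, by rw [h]; omega⟩
    rintro rfl
    rw [C.diag] at h
    omega
  have hts2 : C.m t s ≠ 2 := by rw [C.symm]; exact hnc
  have htXs : t ∉ ({s} ∪ C.perp {s} : Set S) := by
    simp only [hmXs]; push_neg; exact ⟨hst.symm, hts2⟩
  have hsXt : s ∉ ({t} ∪ C.perp {t} : Set S) := by
    simp only [hmXt]; push_neg; exact ⟨hst, hnc⟩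
  have hmrs : C.m r s ≠ 2 := fun h => hns (adj2 r s h)
  have hrXs : r ∉ ({s} ∪ C.perp {s} : Set S) := by
    simp only [hmXs]; push_neg; exact ⟨hrs, hmrs⟩
  have finishS : Relation.ReflTransGen
      (fun x y => x ∉ ({s} ∪ C.perp {s} : Set S) ∧ y ∉ ({s} ∪ C.perp {s} : Set S) ∧ C.Adj x y)
      t r → C.GoodElt L r s := by
    intro pS
    refine ⟨hrs, hns, ⟨t, ht, htXs⟩, ?_⟩
    intro l hl
    refine ⟨hl.2, hrXs, ?_⟩
    by_cases hlt : l = t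
    · subst hlt; exact pS
    · exact Relation.ReflTransGen.head ⟨hl.2, htXs, hsph hl.1 ht hlt⟩ pS
  by_cases hat : C.Adj r t
  · -- `r` is adjacent to `t`: use the edge `t — r`.
    have hadjtr : C.Adj t r := ⟨hat.1.symm, by rw [C.symm]; exact hat.2⟩
    exact Or.inl (finishS (Relation.ReflTransGen.single ⟨htXs, hrXs, hadjtr⟩))
  · -- `r` is adjacent to neither `s` nor `t`.
    have hmrt : C.m r t ≠ 2 := fun h => hat (adj2 r t h)
    have hrXt : r ∉ ({t} ∪ C.perp {t} : Set S) := by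
      simp only [hmXt]; push_neg; exact ⟨hrt, hmrt⟩
    obtain ⟨l0, hl0⟩ := hne
    obtain ⟨hl0nY, _, hpath⟩ := hconn l0 hl0
    have hl0L : l0 ∈ L := hl0.1
    have main : ∀ a : S, Relation.ReflTransGen (fun x y => x ∉ Y ∧ y ∉ Y ∧ C.Adj x y) a r →
        a ∉ Y →
        Relation.ReflTransGen
          (fun x y => x ∉ ({s} ∪ C.perp {s} : Set S) ∧ y ∉ ({s} ∪ C.perp {s} : Set S) ∧ C.Adj x y) t r ∨
        Relation.ReflTransGen
          (fun x y => x ∉ ({t} ∪ C.perp {t} : Set S) ∧ y ∉ ({t} ∪ C.perp {t} : Set S) ∧ C.Adj x y) s r ∨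
        (a ∉ ({s} ∪ C.perp {s} : Set S) ∧ a ∉ ({t} ∪ C.perp {t} : Set S) ∧
          Relation.ReflTransGen
            (fun x y => x ∉ ({s} ∪ C.perp {s} : Set S) ∧ y ∉ ({s} ∪ C.perp {s} : Set S) ∧ C.Adj x y) a r ∧
          Relation.ReflTransGen
            (fun x y => x ∉ ({t} ∪ C.perp {t} : Set S) ∧ y ∉ ({t} ∪ C.perp {t} : Set S) ∧ C.Adj x y) a r) := by
      intro a h
      induction h using Relation.ReflTransGen.head_induction_on with
      | refl => exact fun _ => Or.inr (Or.inr ⟨hrXs, hrXt, .refl, .refl⟩)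
      | @head a' b' hab hbr ih =>
        intro haY
        obtain ⟨_, hbY, hadj⟩ := hab
        rcases ih hbY with h1 | h1 | ⟨hbXs, hbXt, p1, p2⟩
        · exact Or.inl h1
        · exact Or.inr (Or.inl h1)
        · by_cases haXs : a' ∈ ({s} ∪ C.perp {s} : Set S)
          · -- the current vertex commutes with `s`
            have hmas : C.m a' s = 2 := by
              rcases (hmXs _).1 haXs with h2 | h2
              · exact absurd ((hmY _).2 (Or.inl h2)) haY
              · exact h2
            have hanet : a' ≠ t := fun h => haY ((hmY _).2 (Or.inr (Or.inl h)))
            have hmat : C.m a' t ≠ 2 := fun h => haY ((hmY _).2 (Or.inr (Or.inr ⟨hmas, h⟩)))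
            have haXt : a' ∉ ({t} ∪ C.perp {t} : Set S) := by
              simp only [hmXt]; push_neg; exact ⟨hanet, hmat⟩
            have hadjsa : C.Adj s a' := adj2 s a' (by rw [C.symm]; exact hmas)
            exact Or.inr (Or.inl (Relation.ReflTransGen.head ⟨hsXt, haXt, hadjsa⟩
              (Relation.ReflTransGen.head ⟨haXt, hbXt, hadj⟩ p2)))
          · by_cases haXt : a' ∈ ({t} ∪ C.perp {t} : Set S)
            · have hmat : C.m a' t = 2 := by
                rcases (hmXt _).1 haXt with h2 | h2
                · exact absurd ((hmY _).2 (Or.inr (Or.inl h2))) haY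
                · exact h2
              have hadjta : C.Adj t a' := adj2 t a' (by rw [C.symm]; exact hmat)
              exact Or.inl (Relation.ReflTransGen.head ⟨htXs, haXs, hadjta⟩
                (Relation.ReflTransGen.head ⟨haXs, hbXs, hadj⟩ p1))
            · exact Or.inr (Or.inr ⟨haXs, haXt,
                Relation.ReflTransGen.head ⟨haXs, hbXs, hadj⟩ p1,
                Relation.ReflTransGen.head ⟨haXt, hbXt, hadj⟩ p2⟩)
    rcases main l0 hpath hl0nY with pS | pT | ⟨hl0Xs, _, p1, _⟩
    · exact Or.inl (finishS pS)
    · refine Or.inr ⟨hrt, hat, ⟨s, hs, hsXt⟩, ?_⟩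
      intro l hl
      refine ⟨hl.2, hrXt, ?_⟩
      by_cases hls : l = s
      · subst hls; exact pT
      · exact Relation.ReflTransGen.head ⟨hl.2, hsXt, hsph hl.1 hs hls⟩ pT
    · have hl0net : t ≠ l0 := fun h => hl0nY ((hmY l0).2 (Or.inr (Or.inl h.symm)))
      exact Or.inl (finishS (Relation.ReflTransGen.head ⟨htXs, hl0Xs, hsph ht hl0L hl0net⟩ p1))

/-- If `L` is irreducible spherical, `{s,t} ⊆ L` is a non-commuting pair, `r ∈ S ∖ L`,
and the pair `{s,t}` is good with respect to `r`, then `s` or `t` is good with respect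
to `r`. -/
theorem good_pair_good_single {S : Type*} (C : CoxMat S) (L : Set S)
    (hsph : C.Spherical L) (hirr : C.Irred L)
    (s t r : S) (hs : s ∈ L) (ht : t ∈ L) (hst : s ≠ t) (hnc : C.m s t ≠ 2)
    (hrL : r ∉ L) (hgood : C.GoodPair L r s t) :
    C.GoodElt L r s ∨ C.GoodElt L r t := by
  obtain ⟨hnsph, hne, hconn⟩ := hgood
  have hadjst : C.Adj s t := hsph hs ht hst
  have hadjts : C.Adj t s := ⟨hst.symm, by rw [C.symm]; exact hadjst.2⟩
  have hrs : r ≠ s := by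
    rintro rfl
    apply hnsph
    intro x hx y hy hxy
    simp only [Set.mem_insert_iff, Set.mem_singleton_iff] at hx hy
    rcases hx with rfl | rfl | rfl <;> rcases hy with rfl | rfl | rfl <;>
      first
        | exact absurd rfl hxy
        | exact hadjst
        | exact hadjts
  have hrt : r ≠ t := by
    rintro rfl
    apply hnsph
    intro x hx y hy hxy
    simp only [Set.mem_insert_iff, Set.mem_singleton_iff] at hx hy
    rcases hx with rfl | rfl | rfl <;> rcases hy with rfl | rfl | rfl <;>
      first
        | exact absurd rfl hxy
        | exact hadjst
        | exact hadjts
  have hdisj : ¬ C.Adj r s ∨ ¬ C.Adj r t := by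
    by_contra h
    push_neg at h
    obtain ⟨h1, h2⟩ := h
    have h1' : C.Adj s r := ⟨h1.1.symm, by rw [C.symm]; exact h1.2⟩
    have h2' : C.Adj t r := ⟨h2.1.symm, by rw [C.symm]; exact h2.2⟩
    apply hnsph
    intro x hx y hy hxy
    simp only [Set.mem_insert_iff, Set.mem_singleton_iff] at hx hy
    rcases hx with rfl | rfl | rfl <;> rcases hy with rfl | rfl | rfl <;>
      first
        | exact absurd rfl hxy
        | assumption
  rcases hdisj with hns | hnt
  · exact good_pair_aux C L hsph s t r hs ht hst hnc hrs hrt hns hne hconn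
  · have hpair : ({t, s} : Set S) = {s, t} := Set.pair_comm t s
    have hne' : (L \ ({t, s} ∪ C.perp {t, s})).Nonempty := by rw [hpair]; exact hne
    have hconn' : ∀ l ∈ L \ ({t, s} ∪ C.perp {t, s}),
        C.SameComp ({t, s} ∪ C.perp {t, s}) l r := by rw [hpair]; exact hconn
    exact (good_pair_aux C L hsph t s r ht hs hst.symm
      (by rw [C.symm]; exact hnc) hrt hrs hnt hne' hconn').symm
end

section
/- Let L ⊆ S be irreducible spherical and let s, t, p be consecutive vertices in the Coxeter–Dynkin diagram of L with {s,t,p,r} not spherical for some r ∈ S. Assume S is 3-rigid. If {s,t} is not good with respect to r and {t,p} is not good with respect to r, then no element of S∖({s,t,p} ∪ {s,t,p}^⊥) is adjacent to s or to p in the defining graph. -/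
namespace CoxMat

variable {S : Type*} (C : CoxMat S)

lemma adj_symm {a b : S} (h : C.Adj a b) : C.Adj b a :=
  ⟨h.1.symm, by rw [C.symm b a]; exact h.2⟩

lemma adj_of_comm {a b : S} (hne : a ≠ b) (h : C.m a b = 2) : C.Adj a b :=
  ⟨hne, by omega⟩

lemma sph3 {a b c : S} (h1 : C.Adj a b) (h2 : C.Adj a c) (h3 : C.Adj b c) :
    C.Spherical {a, b, c} := by
  intro x hx y hy hxy
  simp only [Set.mem_insert_iff, Set.mem_singleton_iff] at hx hy
  rcases hx with rfl | rfl | rfl <;> rcases hy with rfl | rfl | rfl <;>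
    first
      | exact absurd rfl hxy
      | assumption
      | exact C.adj_symm h1
      | exact C.adj_symm h2
      | exact C.adj_symm h3

lemma sph4 {a b c d : S} (h1 : C.Adj a b) (h2 : C.Adj a c) (h3 : C.Adj a d)
    (h4 : C.Adj b c) (h5 : C.Adj b d) (h6 : C.Adj c d) :
    C.Spherical {a, b, c, d} := by
  intro x hx y hy hxy
  simp only [Set.mem_insert_iff, Set.mem_singleton_iff] at hx hy
  rcases hx with rfl | rfl | rfl | rfl <;> rcases hy with rfl | rfl | rfl | rfl <;>
    first
      | exact absurd rfl hxy
      | assumption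
      | exact C.adj_symm h1
      | exact C.adj_symm h2
      | exact C.adj_symm h3
      | exact C.adj_symm h4
      | exact C.adj_symm h5
      | exact C.adj_symm h6

end CoxMat


/-- Let `L` be irreducible spherical, `s, t, p` consecutive vertices in the
Coxeter–Dynkin diagram of `L`, with `{s,t,p,r}` not spherical, and let `S` be 3-rigid.
If `{s,t}` is not good with respect to `r` and `{t,p}` is not good with respect to `r`,
then no element of `S ∖ ({s,t,p} ∪ {s,t,p}^⊥)` is adjacent to `s` or to `p`. -/
theorem good_pair_jump_1 {S : Type*} (C : CoxMat S)
    (hrig : C.ThreeRigid) (L : Set S)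
    (hsph : C.Spherical L) (hirr : C.Irred L)
    (s t p r : S) (hcons : C.Consecutive L s t p)
    (hr : ¬ C.Spherical {s, t, p, r})
    (hst : ¬ C.GoodPair L r s t) (htp : ¬ C.GoodPair L r t p) :
    ∀ k, k ∉ ({s, t, p} : Set S) ∪ C.perp {s, t, p} →
      ¬ C.Adj k s ∧ ¬ C.Adj k p := by
  obtain ⟨hsL, htL, hpL, hst_ne, htp_ne, hsp_ne, hmst, hmtp, hmsp⟩ := hcons
  have hAst : C.Adj s t := hsph hsL htL hst_ne
  have hAtp : C.Adj t p := hsph htL hpL htp_ne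
  have hAsp : C.Adj s p := hsph hsL hpL hsp_ne
  -- r is not one of s, t, p
  have hrJ : r ∉ ({s, t, p} : Set S) := by
    intro hrmem
    apply hr
    have hsub : ({s, t, p, r} : Set S) ⊆ L := by
      intro x hx
      simp only [Set.mem_insert_iff, Set.mem_singleton_iff] at hx
      rcases hx with rfl | rfl | rfl | rfl
      · exact hsL
      · exact htL
      · exact hpL
      · simp only [Set.mem_insert_iff, Set.mem_singleton_iff] at hrmem
        rcases hrmem with rfl | rfl | rfl
        · exact hsL
        · exact htL
        · exact hpL
    exact hsph.mono hsub
  have hrs : r ≠ s := fun h => hrJ (by simp [h])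
  have hrt : r ≠ t := fun h => hrJ (by simp [h])
  have hrp : r ≠ p := fun h => hrJ (by simp [h])
  have quad : C.Adj s r → C.Adj t r → C.Adj p r → False := fun h1 h2 h3 =>
    hr (C.sph4 hAst hAsp h1 hAtp h2 h3)
  -- s avoids {t,p} ∪ perp {t,p}, and p avoids {s,t} ∪ perp {s,t}
  have hsYtp : s ∉ ({t, p} : Set S) ∪ C.perp {t, p} := by
    rintro (h' | h')
    · simp only [Set.mem_insert_iff, Set.mem_singleton_iff] at h'
      rcases h' with rfl | rfl
      · exact hst_ne rfl
      · exact hsp_ne rfl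
    · exact hmst (h'.2 t (by simp))
  have hpYst : p ∉ ({s, t} : Set S) ∪ C.perp {s, t} := by
    rintro (h' | h')
    · simp only [Set.mem_insert_iff, Set.mem_singleton_iff] at h'
      rcases h' with rfl | rfl
      · exact hsp_ne rfl
      · exact htp_ne rfl
    · have := h'.2 t (by simp)
      rw [C.symm p t] at this
      exact hmtp this
  -- {s,t,r} is not spherical
  have hS1 : ¬ C.Spherical {s, t, r} := by
    intro h
    have hAsr : C.Adj s r := h (by simp) (by simp) hrs.symm
    have hAtr : C.Adj t r := h (by simp) (by simp) hrt.symm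
    have hrYtp : r ∉ ({t, p} : Set S) ∪ C.perp {t, p} := by
      rintro (h' | h')
      · simp only [Set.mem_insert_iff, Set.mem_singleton_iff] at h'
        rcases h' with rfl | rfl
        · exact hrt rfl
        · exact hrp rfl
      · exact quad hAsr hAtr (C.adj_symm (C.adj_of_comm hrp (h'.2 p (by simp))))
    apply htp
    refine ⟨?_, ⟨s, hsL, hsYtp⟩, ?_⟩
    · intro h2
      exact quad hAsr hAtr (h2 (by simp) (by simp) hrp.symm)
    · intro l hl
      obtain ⟨hlL, hlY⟩ := hl
      refine ⟨hlY, hrYtp, ?_⟩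
      by_cases hls : l = s
      · subst hls
        exact Relation.ReflTransGen.single ⟨hsYtp, hrYtp, hAsr⟩
      · exact (Relation.ReflTransGen.single ⟨hsYtp, hrYtp, hAsr⟩).head
          ⟨hlY, hsYtp, hsph hlL hsL hls⟩
  -- {t,p,r} is not spherical
  have hS2 : ¬ C.Spherical {t, p, r} := by
    intro h
    have hAtr : C.Adj t r := h (by simp) (by simp) hrt.symm
    have hApr : C.Adj p r := h (by simp) (by simp) hrp.symm
    have hrYst : r ∉ ({s, t} : Set S) ∪ C.perp {s, t} := by
      rintro (h' | h')
      · simp only [Set.mem_insert_iff, Set.mem_singleton_iff] at h'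
        rcases h' with rfl | rfl
        · exact hrs rfl
        · exact hrt rfl
      · exact quad (C.adj_symm (C.adj_of_comm hrs (h'.2 s (by simp)))) hAtr hApr
    apply hst
    refine ⟨?_, ⟨p, hpL, hpYst⟩, ?_⟩
    · intro h2
      exact quad (h2 (by simp) (by simp) hrs.symm) hAtr hApr
    · intro l hl
      obtain ⟨hlL, hlY⟩ := hl
      refine ⟨hlY, hrYst, ?_⟩
      by_cases hlp : l = p
      · subst hlp
        exact Relation.ReflTransGen.single ⟨hpYst, hrYst, hApr⟩
      · exact (Relation.ReflTransGen.single ⟨hpYst, hrYst, hApr⟩).head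
          ⟨hlY, hpYst, hsph hlL hpL hlp⟩
  -- r lies outside both pair-stars
  have hrYst : r ∉ ({s, t} : Set S) ∪ C.perp {s, t} := by
    rintro (h' | h')
    · simp only [Set.mem_insert_iff, Set.mem_singleton_iff] at h'
      rcases h' with rfl | rfl
      · exact hrs rfl
      · exact hrt rfl
    · exact hS1 (C.sph3 hAst (C.adj_symm (C.adj_of_comm hrs (h'.2 s (by simp))))
        (C.adj_symm (C.adj_of_comm hrt (h'.2 t (by simp)))))
  have hrYtp : r ∉ ({t, p} : Set S) ∪ C.perp {t, p} := by
    rintro (h' | h')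
    · simp only [Set.mem_insert_iff, Set.mem_singleton_iff] at h'
      rcases h' with rfl | rfl
      · exact hrt rfl
      · exact hrp rfl
    · exact hS2 (C.sph3 hAtp (C.adj_symm (C.adj_of_comm hrt (h'.2 t (by simp))))
        (C.adj_symm (C.adj_of_comm hrp (h'.2 p (by simp)))))
  -- p cannot be joined to r outside {s,t} ∪ perp {s,t}
  have hnp : ¬ C.SameComp (({s, t} : Set S) ∪ C.perp {s, t}) p r := by
    intro hpc
    apply hst
    refine ⟨hS1, ⟨p, hpL, hpYst⟩, ?_⟩
    intro l hl
    obtain ⟨hlL, hlY⟩ := hl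
    by_cases hlp : l = p
    · subst hlp; exact hpc
    · exact ⟨hlY, hpc.2.1, hpc.2.2.head ⟨hlY, hpYst, hsph hlL hpL hlp⟩⟩
  -- s cannot be joined to r outside {t,p} ∪ perp {t,p}
  have hns : ¬ C.SameComp (({t, p} : Set S) ∪ C.perp {t, p}) s r := by
    intro hsc
    apply htp
    refine ⟨hS2, ⟨s, hsL, hsYtp⟩, ?_⟩
    intro l hl
    obtain ⟨hlL, hlY⟩ := hl
    by_cases hls : l = s
    · subst hls; exact hsc
    · exact ⟨hlY, hsc.2.1, hsc.2.2.head ⟨hlY, hsYtp, hsph hlL hsL hls⟩⟩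
  -- {s,t,p} is spherical, irreducible of cardinality 3
  have hJsph : C.Spherical {s, t, p} := C.sph3 hAst hAsp hAtp
  have hJirr : C.Irred {s, t, p} := by
    intro K hK hKne hsub
    have htK : t ∈ K := by
      rcases hsub (show t ∈ ({s, t, p} : Set S) by simp) with h | h
      · exact h
      · obtain ⟨k0, hk0⟩ := hKne
        have hmem : k0 ∈ ({s, t, p} : Set S) := hK.subset hk0
        have h2 := h.2 k0 hk0
        simp only [Set.mem_insert_iff, Set.mem_singleton_iff] at hmem
        rcases hmem with rfl | rfl | rfl
        · rw [C.symm t k0] at h2; exact absurd h2 hmst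
        · exact absurd hk0 h.1
        · exact absurd h2 hmtp
    have hsK : s ∈ K := by
      rcases hsub (show s ∈ ({s, t, p} : Set S) by simp) with h | h
      · exact h
      · exact absurd (h.2 t htK) hmst
    have hpK : p ∈ K := by
      rcases hsub (show p ∈ ({s, t, p} : Set S) by simp) with h | h
      · exact h
      · have h2 := h.2 t htK
        rw [C.symm p t] at h2
        exact absurd h2 hmtp
    apply hK.2
    intro x hx
    simp only [Set.mem_insert_iff, Set.mem_singleton_iff] at hx
    rcases hx with rfl | rfl | rfl
    · exact hsK
    · exact htK
    · exact hpK
  have hJ3 : 3 ≤ ({s, t, p} : Set S).ncard :=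
    le_of_eq (Set.ncard_eq_three.mpr ⟨s, t, p, hst_ne, hsp_ne, htp_ne, rfl⟩).symm
  have hrX : r ∉ ({s, t, p} : Set S) ∪ C.perp {s, t, p} := by
    rintro (h' | h')
    · exact hrJ h'
    · exact quad (C.adj_symm (C.adj_of_comm hrs (h'.2 s (by simp))))
        (C.adj_symm (C.adj_of_comm hrt (h'.2 t (by simp))))
        (C.adj_symm (C.adj_of_comm hrp (h'.2 p (by simp))))
  -- the key transfer lemma along a path avoiding X = {s,t,p} ∪ perp {s,t,p}
  have key : ∀ b, Relation.ReflTransGen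
      (fun x y => x ∉ ({s, t, p} : Set S) ∪ C.perp {s, t, p} ∧
        y ∉ ({s, t, p} : Set S) ∪ C.perp {s, t, p} ∧ C.Adj x y) r b →
      C.SameComp (({s, t} : Set S) ∪ C.perp {s, t}) b r ∧
        C.SameComp (({t, p} : Set S) ∪ C.perp {t, p}) b r := by
    intro b hpb
    induction hpb with
    | refl =>
      exact ⟨⟨hrYst, hrYst, Relation.ReflTransGen.refl⟩,
        ⟨hrYtp, hrYtp, Relation.ReflTransGen.refl⟩⟩
    | @tail z x hzpath hstep ih =>
      obtain ⟨hzX, hxX, hzx⟩ := hstep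
      have hxz : C.Adj x z := C.adj_symm hzx
      obtain ⟨ihst, ihtp⟩ := ih
      have hxJ : x ∉ ({s, t, p} : Set S) := fun h => hxX (Or.inl h)
      have hxs : x ≠ s := fun h => hxJ (by simp [h])
      have hxt : x ≠ t := fun h => hxJ (by simp [h])
      have hxp : x ≠ p := fun h => hxJ (by simp [h])
      by_cases h1 : x ∈ C.perp {s, t}
      · exfalso
        have hmxs : C.m x s = 2 := h1.2 s (by simp)
        have hmxt : C.m x t = 2 := h1.2 t (by simp)
        have hxYtp : x ∉ ({t, p} : Set S) ∪ C.perp {t, p} := by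
          rintro (h' | h')
          · simp only [Set.mem_insert_iff, Set.mem_singleton_iff] at h'
            rcases h' with rfl | rfl
            · exact hxt rfl
            · exact hxp rfl
          · apply hxX
            right
            refine ⟨hxJ, fun j hj => ?_⟩
            simp only [Set.mem_insert_iff, Set.mem_singleton_iff] at hj
            rcases hj with rfl | rfl | rfl
            · exact hmxs
            · exact hmxt
            · exact h'.2 _ (by simp)
        exact hns ⟨hsYtp, hrYtp,
          ((ihtp.2.2.head ⟨hxYtp, ihtp.1, hxz⟩).head
            ⟨hsYtp, hxYtp, C.adj_symm (C.adj_of_comm hxs hmxs)⟩)⟩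
      · by_cases h2 : x ∈ C.perp {t, p}
        · exfalso
          have hmxp : C.m x p = 2 := h2.2 p (by simp)
          have hxYst : x ∉ ({s, t} : Set S) ∪ C.perp {s, t} := by
            rintro (h' | h')
            · simp only [Set.mem_insert_iff, Set.mem_singleton_iff] at h'
              rcases h' with rfl | rfl
              · exact hxs rfl
              · exact hxt rfl
            · exact h1 h'
          exact hnp ⟨hpYst, hrYst,
            ((ihst.2.2.head ⟨hxYst, ihst.1, hxz⟩).head
              ⟨hpYst, hxYst, C.adj_symm (C.adj_of_comm hxp hmxp)⟩)⟩
        · have hxYst : x ∉ ({s, t} : Set S) ∪ C.perp {s, t} := by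
            rintro (h' | h')
            · simp only [Set.mem_insert_iff, Set.mem_singleton_iff] at h'
              rcases h' with rfl | rfl
              · exact hxs rfl
              · exact hxt rfl
            · exact h1 h'
          have hxYtp : x ∉ ({t, p} : Set S) ∪ C.perp {t, p} := by
            rintro (h' | h')
            · simp only [Set.mem_insert_iff, Set.mem_singleton_iff] at h'
              rcases h' with rfl | rfl
              · exact hxt rfl
              · exact hxp rfl
            · exact h2 h'
          exact ⟨⟨hxYst, hrYst, ihst.2.2.head ⟨hxYst, ihst.1, hxz⟩⟩,
            ⟨hxYtp, hrYtp, ihtp.2.2.head ⟨hxYtp, ihtp.1, hxz⟩⟩⟩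
  intro k hk
  have hpath := (hrig {s, t, p} hJsph hJirr hJ3 k r hk hrX).2.2
  have hsymm : Symmetric (fun x y => x ∉ ({s, t, p} : Set S) ∪ C.perp {s, t, p} ∧
      y ∉ ({s, t, p} : Set S) ∪ C.perp {s, t, p} ∧ C.Adj x y) :=
    fun _ _ h => ⟨h.2.1, h.1, C.adj_symm h.2.2⟩
  have hpath' := (@Relation.ReflTransGen.symmetric _ _ ⟨hsymm⟩).symm _ _ hpath
  obtain ⟨hKst, hKtp⟩ := key k hpath'
  constructor
  · intro hAks
    exact hns ⟨hsYtp, hrYtp, hKtp.2.2.head ⟨hsYtp, hKtp.1, C.adj_symm hAks⟩⟩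
  · intro hAkp
    exact hnp ⟨hpYst, hrYst, hKst.2.2.head ⟨hpYst, hKst.1, C.adj_symm hAkp⟩⟩
end

section
/- Let S be a Coxeter generating set of type FC that is 3-rigid, let L ⊆ S be irreducible spherical, and let r ∈ S with L ∪ {r} not spherical. If every non-commuting pair {s,t} ⊆ L fails to be good with respect to r, then L is exposed, i.e., |L| ≤ 2, or |L| = 3 and at least two elements of L are adjacent to no element of S∖(L ∪ L^⊥). -/
section Helpers

variable {S : Type*}

lemma cox_adj_symm (C : CoxMat S) {a b : S} (h : C.Adj a b) : C.Adj b a :=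
  ⟨h.1.symm, by rw [C.symm]; exact h.2⟩

lemma cox_adj_of_two (C : CoxMat S) {a b : S} (h : C.m a b = 2) : C.Adj a b :=
  ⟨by rintro rfl; rw [C.diag] at h; omega, by rw [h]; omega⟩

lemma cox_sameComp_head (C : CoxMat S) {X : Set S} {a b c : S} (ha : a ∉ X)
    (hab : C.Adj a b) (h : C.SameComp X b c) : C.SameComp X a c :=
  ⟨ha, h.2.1, Relation.ReflTransGen.head ⟨ha, h.1, hab⟩ h.2.2⟩

/-- If some `h ∈ L` outside `X = {s,t} ∪ {s,t}^⊥` reaches `r` avoiding `X`, where the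
pair `{s,t}` is a non-commuting pair of `L` with `r` non-adjacent to `s` or `t`, then
the pair is good -- contradicting `hno`. -/
lemma cox_goodvia (C : CoxMat S) {L : Set S} {r : S}
    (hsph : C.Spherical L)
    (hno : ∀ s ∈ L, ∀ t ∈ L, s ≠ t → C.m s t ≠ 2 → ¬ C.GoodPair L r s t)
    (hrL : r ∉ L) {s t : S} (hs : s ∈ L) (ht : t ∈ L) (hst : s ≠ t)
    (hm : C.m s t ≠ 2) (hnr : C.m r s = 0 ∨ C.m r t = 0)
    {h : S} (hhL : h ∈ L) (hhX : h ∉ ({s, t} : Set S) ∪ C.perp {s, t})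
    (hS : C.SameComp (({s, t} : Set S) ∪ C.perp {s, t}) h r) : False := by
  apply hno s hs t ht hst hm
  refine ⟨?_, ⟨h, hhL, hhX⟩, ?_⟩
  · intro hsp
    rcases hnr with h0 | h0
    · have had : C.Adj s r :=
        hsp (by simp) (by simp) (fun he => hrL (he ▸ hs))
      exact had.2 (by rw [C.symm]; exact h0)
    · have had : C.Adj t r :=
        hsp (by simp) (by simp) (fun he => hrL (he ▸ ht))
      exact had.2 (by rw [C.symm]; exact h0)
  · intro l hl
    obtain ⟨hl1, hl2⟩ := hl
    rcases eq_or_ne l h with rfl | hne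
    · exact hS
    · exact cox_sameComp_head C hl2 (hsph hl1 hhL hne) hS

/-- The main auxiliary lemma: given a triple `x,y,z` in `L` with `m x y ≠ 2`,
`m y z ≠ 2` and with `r` non-adjacent to a member of each of the pairs `{x,y}`,
`{y,z}`, the conclusion of the theorem follows. -/
lemma cox_aux (C : CoxMat S)
    (hrig : C.ThreeRigid) (L : Set S)
    (hsph : C.Spherical L) (hirr : C.Irred L)
    (r : S) (hrL : r ∉ L)
    (hno : ∀ s ∈ L, ∀ t ∈ L, s ≠ t → C.m s t ≠ 2 → ¬ C.GoodPair L r s t)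
    (hfin : L.Finite) (hL3 : 3 ≤ L.ncard)
    (x y z : S) (hxL : x ∈ L) (hyL : y ∈ L) (hzL : z ∈ L)
    (hxy' : x ≠ y) (hyz' : y ≠ z) (hxz' : x ≠ z)
    (hxy : C.m x y ≠ 2) (hyz : C.m y z ≠ 2)
    (hr1 : C.m r x = 0 ∨ C.m r y = 0) (hr2 : C.m r y = 0 ∨ C.m r z = 0) :
    C.Exposed L := by
  have hJL : ({x, y, z} : Set S) ⊆ L := by
    intro p hp
    simp only [Set.mem_insert_iff, Set.mem_singleton_iff] at hp
    rcases hp with rfl | rfl | rfl <;> assumption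
  -- r is outside Y = J ∪ J^⊥ and outside X₁, X₂
  have hrY : r ∉ ({x, y, z} : Set S) ∪ C.perp {x, y, z} := by
    intro hc
    rcases hc with hc | hc
    · exact hrL (hJL hc)
    · rcases hr1 with h0 | h0
      · have := hc.2 x (by simp); omega
      · have := hc.2 y (by simp); omega
  have hrX₁ : r ∉ ({x, y} : Set S) ∪ C.perp {x, y} := by
    intro hc
    rcases hc with hc | hc
    · simp only [Set.mem_insert_iff, Set.mem_singleton_iff] at hc
      rcases hc with hc | hc
      exacts [hrL (hc.symm ▸ hxL), hrL (hc.symm ▸ hyL)]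
    · rcases hr1 with h0 | h0
      · have := hc.2 x (by simp); omega
      · have := hc.2 y (by simp); omega
  have hrX₂ : r ∉ ({y, z} : Set S) ∪ C.perp {y, z} := by
    intro hc
    rcases hc with hc | hc
    · simp only [Set.mem_insert_iff, Set.mem_singleton_iff] at hc
      rcases hc with hc | hc
      exacts [hrL (hc.symm ▸ hyL), hrL (hc.symm ▸ hzL)]
    · rcases hr2 with h0 | h0
      · have := hc.2 y (by simp); omega
      · have := hc.2 z (by simp); omega
  -- the hubs
  have hxX₂ : x ∉ ({y, z} : Set S) ∪ C.perp {y, z} := by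
    intro hc
    rcases hc with hc | hc
    · simp only [Set.mem_insert_iff, Set.mem_singleton_iff] at hc
      rcases hc with hc | hc
      exacts [hxy' hc, hxz' hc]
    · exact hxy (hc.2 y (by simp))
  have hzX₁ : z ∉ ({x, y} : Set S) ∪ C.perp {x, y} := by
    intro hc
    rcases hc with hc | hc
    · simp only [Set.mem_insert_iff, Set.mem_singleton_iff] at hc
      rcases hc with hc | hc
      exacts [hxz' hc.symm, hyz' hc.symm]
    · exact hyz ((C.symm y z).trans (hc.2 y (by simp)))
  -- classification: a vertex outside Y in {x,y}^⊥ is outside X₂, and vice versa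
  have hclassA : ∀ w, w ∉ ({x, y, z} : Set S) ∪ C.perp {x, y, z} →
      w ∈ C.perp {x, y} → w ∉ ({y, z} : Set S) ∪ C.perp {y, z} := by
    intro w hwY hwp hc
    rcases hc with hc | hc
    · simp only [Set.mem_insert_iff, Set.mem_singleton_iff] at hc
      rcases hc with rfl | rfl
      · exact hwp.1 (by simp)
      · exact hwY (Or.inl (by simp))
    · refine hwY (Or.inr ⟨fun hJ => hwY (Or.inl hJ), ?_⟩)
      intro j hj
      simp only [Set.mem_insert_iff, Set.mem_singleton_iff] at hj
      rcases hj with rfl | rfl | rfl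
      · exact hwp.2 j (by simp)
      · exact hwp.2 j (by simp)
      · exact hc.2 j (by simp)
  have hclassB : ∀ w, w ∉ ({x, y, z} : Set S) ∪ C.perp {x, y, z} →
      w ∈ C.perp {y, z} → w ∉ ({x, y} : Set S) ∪ C.perp {x, y} := by
    intro w hwY hwp hc
    rcases hc with hc | hc
    · simp only [Set.mem_insert_iff, Set.mem_singleton_iff] at hc
      rcases hc with rfl | rfl
      · exact hwY (Or.inl (by simp))
      · exact hwp.1 (by simp)
    · refine hwY (Or.inr ⟨fun hJ => hwY (Or.inl hJ), ?_⟩)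
      intro j hj
      simp only [Set.mem_insert_iff, Set.mem_singleton_iff] at hj
      rcases hj with rfl | rfl | rfl
      · exact hc.2 j (by simp)
      · exact hc.2 j (by simp)
      · exact hwp.2 j (by simp)
  -- J is spherical, irreducible, of size 3
  have hsphJ : C.Spherical ({x, y, z} : Set S) :=
    fun p hp q hq hne => hsph (hJL hp) (hJL hq) hne
  have hirrJ : C.Irred ({x, y, z} : Set S) := by
    intro K hK hKne hsub
    obtain ⟨hK1, hK2⟩ := ssubset_iff_subset_not_subset.mp hK
    have hyK : y ∈ K := by
      by_contra hyK
      have hyperp : y ∈ C.perp K :=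
        (hsub (show y ∈ ({x, y, z} : Set S) by simp)).resolve_left hyK
      obtain ⟨k₀, hk₀⟩ := hKne
      have hk₀J := hK1 hk₀
      simp only [Set.mem_insert_iff, Set.mem_singleton_iff] at hk₀J
      have h2 := hyperp.2 k₀ hk₀
      rcases hk₀J with h | h | h
      · rw [h] at h2; exact hxy ((C.symm x y).trans h2)
      · rw [h] at hk₀; exact hyperp.1 hk₀
      · rw [h] at h2; exact hyz h2
    have hxK : x ∈ K := by
      rcases hsub (show x ∈ ({x, y, z} : Set S) by simp) with h | h
      · exact h
      · exact absurd (h.2 y hyK) hxy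
    have hzK : z ∈ K := by
      rcases hsub (show z ∈ ({x, y, z} : Set S) by simp) with h | h
      · exact h
      · exact absurd ((C.symm y z).trans (h.2 y hyK)) hyz
    apply hK2
    intro p hp
    simp only [Set.mem_insert_iff, Set.mem_singleton_iff] at hp
    rcases hp with rfl | rfl | rfl <;> assumption
  have hJ3 : ({x, y, z} : Set S).ncard = 3 :=
    Set.ncard_eq_three.mpr ⟨x, y, z, hxy', hxz', hyz', rfl⟩
  have hrigJ := hrig ({x, y, z} : Set S) hsphJ hirrJ (by rw [hJ3])
  -- the core induction along rigidity paths
  have core : ∀ v : S,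
      Relation.ReflTransGen
        (fun p q => p ∉ ({x, y, z} : Set S) ∪ C.perp {x, y, z} ∧
          q ∉ ({x, y, z} : Set S) ∪ C.perp {x, y, z} ∧ C.Adj p q) v r →
      ((v ∉ ({x, y} : Set S) ∪ C.perp {x, y} →
          C.SameComp (({x, y} : Set S) ∪ C.perp {x, y}) v r) ∧
        (v ∉ ({y, z} : Set S) ∪ C.perp {y, z} →
          C.SameComp (({y, z} : Set S) ∪ C.perp {y, z}) v r)) := by
    intro v hv
    refine Relation.ReflTransGen.head_induction_on hv
      ⟨fun h => ⟨h, hrX₁, Relation.ReflTransGen.refl⟩,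
        fun h => ⟨h, hrX₂, Relation.ReflTransGen.refl⟩⟩ ?_
    intro v' w hstep hpath ih
    obtain ⟨hv'Y, hwY, hadj⟩ := hstep
    constructor
    · intro hv'X₁
      by_cases hwX₁ : w ∈ ({x, y} : Set S) ∪ C.perp {x, y}
      · -- w lies in {x,y}^⊥; hub x witnesses goodness of the pair {y,z}: contradiction
        have hwp : w ∈ C.perp {x, y} := by
          rcases hwX₁ with h | h
          · exfalso
            simp only [Set.mem_insert_iff, Set.mem_singleton_iff] at h
            rcases h with rfl | rfl
            · exact hwY (Or.inl (by simp))
            · exact hwY (Or.inl (by simp))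
          · exact h
        have hwX₂ := hclassA w hwY hwp
        have h1 := ih.2 hwX₂
        have hadjxw : C.Adj x w := cox_adj_symm C (cox_adj_of_two C (hwp.2 x (by simp)))
        exact absurd (cox_sameComp_head C hxX₂ hadjxw h1)
          (fun hS => cox_goodvia C hsph hno hrL hyL hzL hyz' hyz hr2 hxL hxX₂ hS)
      · exact cox_sameComp_head C hv'X₁ hadj (ih.1 hwX₁)
    · intro hv'X₂
      by_cases hwX₂ : w ∈ ({y, z} : Set S) ∪ C.perp {y, z}
      · have hwp : w ∈ C.perp {y, z} := by
          rcases hwX₂ with h | h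
          · exfalso
            simp only [Set.mem_insert_iff, Set.mem_singleton_iff] at h
            rcases h with rfl | rfl
            · exact hwY (Or.inl (by simp))
            · exact hwY (Or.inl (by simp))
          · exact h
        have hwX₁ := hclassB w hwY hwp
        have h1 := ih.1 hwX₁
        have hadjzw : C.Adj z w := cox_adj_symm C (cox_adj_of_two C (hwp.2 z (by simp)))
        exact absurd (cox_sameComp_head C hzX₁ hadjzw h1)
          (fun hS => cox_goodvia C hsph hno hrL hxL hyL hxy' hxy hr1 hzL hzX₁ hS)
      · exact cox_sameComp_head C hv'X₂ hadj (ih.2 hwX₂)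
  -- endgame
  by_cases hc3 : L.ncard = 3
  · -- L = {x,y,z}; x and z are adjacent to nothing outside L ∪ L^⊥
    have hLJ : ({x, y, z} : Set S) = L :=
      Set.eq_of_subset_of_ncard_le hJL (by rw [hJ3, hc3]) hfin
    refine Or.inr ⟨hc3, x, hxL, z, hzL, hxz', ?_, ?_⟩
    · intro k hk hAdj
      rw [← hLJ] at hk
      have hpath := (hrigJ k r hk hrY).2.2
      by_cases hkX₂ : k ∈ ({y, z} : Set S) ∪ C.perp {y, z}
      · have hkp : k ∈ C.perp {y, z} := by
          rcases hkX₂ with h | h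
          · exfalso
            simp only [Set.mem_insert_iff, Set.mem_singleton_iff] at h
            rcases h with rfl | rfl
            · exact hk (Or.inl (by simp))
            · exact hk (Or.inl (by simp))
          · exact h
        have hkX₁ := hclassB k hk hkp
        have h1 := (core k hpath).1 hkX₁
        have hadjzk : C.Adj z k := cox_adj_symm C (cox_adj_of_two C (hkp.2 z (by simp)))
        exact cox_goodvia C hsph hno hrL hxL hyL hxy' hxy hr1 hzL hzX₁
          (cox_sameComp_head C hzX₁ hadjzk h1)
      · have h2 := (core k hpath).2 hkX₂
        exact cox_goodvia C hsph hno hrL hyL hzL hyz' hyz hr2 hxL hxX₂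
          (cox_sameComp_head C hxX₂ hAdj h2)
    · intro k hk hAdj
      rw [← hLJ] at hk
      have hpath := (hrigJ k r hk hrY).2.2
      by_cases hkX₁ : k ∈ ({x, y} : Set S) ∪ C.perp {x, y}
      · have hkp : k ∈ C.perp {x, y} := by
          rcases hkX₁ with h | h
          · exfalso
            simp only [Set.mem_insert_iff, Set.mem_singleton_iff] at h
            rcases h with rfl | rfl
            · exact hk (Or.inl (by simp))
            · exact hk (Or.inl (by simp))
          · exact h
        have hkX₂ := hclassA k hk hkp
        have h1 := (core k hpath).2 hkX₂
        have hadjxk : C.Adj x k := cox_adj_symm C (cox_adj_of_two C (hkp.2 x (by simp)))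
        exact cox_goodvia C hsph hno hrL hyL hzL hyz' hyz hr2 hxL hxX₂
          (cox_sameComp_head C hxX₂ hadjxk h1)
      · have h1 := (core k hpath).1 hkX₁
        exact cox_goodvia C hsph hno hrL hxL hyL hxy' hxy hr1 hzL hzX₁
          (cox_sameComp_head C hzX₁ hAdj h1)
  · -- |L| ≥ 4: contradiction
    exfalso
    have hssubJ : ({x, y, z} : Set S) ⊂ L := by
      refine ssubset_iff_subset_not_subset.mpr ⟨hJL, fun hsub => ?_⟩
      have := Set.ncard_le_ncard hsub (Set.toFinite _)
      rw [hJ3] at this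
      omega
    obtain ⟨l₄, hl₄L, hl₄Y⟩ :=
      Set.not_subset.mp (hirr ({x, y, z} : Set S) hssubJ ⟨x, by simp⟩)
    have hl₄J : l₄ ∉ ({x, y, z} : Set S) := fun h => hl₄Y (Or.inl h)
    have hl₄perp : ∃ j ∈ ({x, y, z} : Set S), C.m l₄ j ≠ 2 := by
      by_contra hcon
      push_neg at hcon
      exact hl₄Y (Or.inr ⟨hl₄J, hcon⟩)
    obtain ⟨j, hjJ, hj2⟩ := hl₄perp
    have hpath := (hrigJ l₄ r hl₄Y hrY).2.2
    simp only [Set.mem_insert_iff, Set.mem_singleton_iff] at hjJ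
    rcases hjJ with hj | hj | hj
    · rw [hj] at hj2
      have hl₄X₁ : l₄ ∉ ({x, y} : Set S) ∪ C.perp {x, y} := by
        intro hc
        rcases hc with h | h
        · simp only [Set.mem_insert_iff, Set.mem_singleton_iff] at h
          rcases h with h | h
          · exact hl₄J (by simp [h])
          · exact hl₄J (by simp [h])
        · exact hj2 (h.2 x (by simp))
      exact cox_goodvia C hsph hno hrL hxL hyL hxy' hxy hr1 hl₄L hl₄X₁
        ((core l₄ hpath).1 hl₄X₁)
    · rw [hj] at hj2
      have hl₄X₁ : l₄ ∉ ({x, y} : Set S) ∪ C.perp {x, y} := by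
        intro hc
        rcases hc with h | h
        · simp only [Set.mem_insert_iff, Set.mem_singleton_iff] at h
          rcases h with h | h
          · exact hl₄J (by simp [h])
          · exact hl₄J (by simp [h])
        · exact hj2 (h.2 y (by simp))
      exact cox_goodvia C hsph hno hrL hxL hyL hxy' hxy hr1 hl₄L hl₄X₁
        ((core l₄ hpath).1 hl₄X₁)
    · rw [hj] at hj2
      have hl₄X₂ : l₄ ∉ ({y, z} : Set S) ∪ C.perp {y, z} := by
        intro hc
        rcases hc with h | h
        · simp only [Set.mem_insert_iff, Set.mem_singleton_iff] at h
          rcases h with h | h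
          · exact hl₄J (by simp [h])
          · exact hl₄J (by simp [h])
        · exact hj2 (h.2 z (by simp))
      exact cox_goodvia C hsph hno hrL hyL hzL hyz' hyz hr2 hl₄L hl₄X₂
        ((core l₄ hpath).2 hl₄X₂)

end Helpers


/-- Let `S` be 3-rigid (of type FC), `L ⊆ S` irreducible spherical, and `r ∈ S` with
`L ∪ {r}` not spherical. If every non-commuting pair `{s,t} ⊆ L` fails to be good with
respect to `r`, then `L` is exposed. -/
theorem exposed_criteria {S : Type*} (C : CoxMat S)
    (hrig : C.ThreeRigid) (L : Set S)
    (hsph : C.Spherical L) (hirr : C.Irred L)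
    (r : S) (hr : ¬ C.Spherical (L ∪ {r}))
    (hno : ∀ s ∈ L, ∀ t ∈ L, s ≠ t → C.m s t ≠ 2 → ¬ C.GoodPair L r s t) :
    C.Exposed L := by
  classical
  by_cases hfin : L.Finite
  swap
  · exact Or.inl (by rw [Set.Infinite.ncard hfin]; omega)
  by_cases h2 : L.ncard ≤ 2
  · exact Or.inl h2
  have hL3 : 3 ≤ L.ncard := by omega
  have hrL : r ∉ L := fun hrmem =>
    hr (by rwa [Set.union_singleton, Set.insert_eq_self.mpr hrmem])
  -- extract a ∈ L with m r a = 0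
  have ha : ∃ a ∈ L, C.m r a = 0 := by
    by_contra hcon
    push_neg at hcon
    apply hr
    intro p hp q hq hpq
    rcases hp with hp | hp <;> rcases hq with hq | hq
    · exact hsph hp hq hpq
    · have hq' : q = r := hq
      subst hq'
      exact ⟨hpq, by rw [C.symm]; exact hcon p hp⟩
    · have hp' : p = r := hp
      subst hp'
      exact ⟨hpq, hcon q hq⟩
    · exact absurd ((Set.mem_singleton_iff.mp hp).trans
        (Set.mem_singleton_iff.mp hq).symm) hpq
  obtain ⟨a, haL, hra⟩ := ha
  -- b : a neighbour of a in the diagram of L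
  obtain ⟨b₀, hb₀L, hb₀a⟩ := Set.exists_ne_of_one_lt_ncard (show 1 < L.ncard by omega) a
  have hssub1 : ({a} : Set S) ⊂ L :=
    ssubset_iff_subset_not_subset.mpr ⟨Set.singleton_subset_iff.mpr haL,
      fun hsub => hb₀a (Set.mem_singleton_iff.mp (hsub hb₀L))⟩
  obtain ⟨b, hbL, hbn⟩ := Set.not_subset.mp (hirr ({a} : Set S) hssub1 ⟨a, rfl⟩)
  have hba : b ≠ a := fun he => hbn (Or.inl (by simp [he]))
  have hmba : C.m b a ≠ 2 := by
    intro h2'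
    exact hbn (Or.inr ⟨by simp [hba], by
      intro j hj
      rw [Set.mem_singleton_iff.mp hj]
      exact h2'⟩)
  have hmab : C.m a b ≠ 2 := fun h => hmba ((C.symm b a).trans h)
  -- c outside {a,b} ∪ {a,b}^⊥
  have hssub2 : ({a, b} : Set S) ⊂ L := by
    refine ssubset_iff_subset_not_subset.mpr ⟨?_, fun hsub => ?_⟩
    · intro p hp
      simp only [Set.mem_insert_iff, Set.mem_singleton_iff] at hp
      rcases hp with rfl | rfl <;> assumption
    · have h1 := Set.ncard_le_ncard hsub (Set.toFinite ({a, b} : Set S))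
      rw [Set.ncard_pair (fun he => hba he.symm)] at h1
      omega
  obtain ⟨c, hcL, hcn⟩ := Set.not_subset.mp (hirr ({a, b} : Set S) hssub2 ⟨a, by simp⟩)
  have hcab : c ∉ ({a, b} : Set S) := fun h => hcn (Or.inl h)
  have hca : c ≠ a := fun he => hcab (by simp [he])
  have hcb : c ≠ b := fun he => hcab (by simp [he])
  have hcperp : C.m c a ≠ 2 ∨ C.m c b ≠ 2 := by
    by_contra hcon
    push_neg at hcon
    refine hcn (Or.inr ⟨hcab, ?_⟩)
    intro j hj
    simp only [Set.mem_insert_iff, Set.mem_singleton_iff] at hj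
    rcases hj with rfl | rfl
    · exact hcon.1
    · exact hcon.2
  have hcX : c ∉ ({a, b} : Set S) ∪ C.perp {a, b} := by
    intro h
    rcases h with h | h
    · exact hcab h
    · rcases hcperp with h' | h'
      · exact h' (h.2 a (by simp))
      · exact h' (h.2 b (by simp))
  have hab : a ≠ b := fun he => hba he.symm
  -- m r c = 0: otherwise the pair {a,b} is good via the one-step path c → r
  have hrc : C.m r c = 0 := by
    by_contra hrc0
    apply hno a haL b hbL hab hmab
    have hrX : r ∉ ({a, b} : Set S) ∪ C.perp {a, b} := by
      intro h
      rcases h with h | h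
      · simp only [Set.mem_insert_iff, Set.mem_singleton_iff] at h
        rcases h with h | h
        exacts [hrL (h.symm ▸ haL), hrL (h.symm ▸ hbL)]
      · have := h.2 a (by simp); omega
    have hadjcr : C.Adj c r :=
      ⟨fun he => hrL (he ▸ hcL), by rw [C.symm]; exact hrc0⟩
    have base : C.SameComp (({a, b} : Set S) ∪ C.perp {a, b}) c r :=
      ⟨hcX, hrX, Relation.ReflTransGen.single ⟨hcX, hrX, hadjcr⟩⟩
    refine ⟨?_, ⟨c, hcL, hcX⟩, ?_⟩
    · intro hsp
      have had : C.Adj a r :=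
        hsp (by simp) (by simp) (fun he => hrL (he ▸ haL))
      exact had.2 (by rw [C.symm]; exact hra)
    · intro l hl
      obtain ⟨hl1, hl2⟩ := hl
      rcases eq_or_ne l c with rfl | hne
      · exact base
      · exact cox_sameComp_head C hl2 (hsph hl1 hcL hne) base
  -- dispatch on the two possible triples
  by_cases hmcb : C.m c b ≠ 2
  · exact cox_aux C hrig L hsph hirr r hrL hno hfin hL3 a b c haL hbL hcL
      hab hcb.symm hca.symm hmab (fun h => hmcb ((C.symm c b).trans h))
      (Or.inl hra) (Or.inr hrc)
  · push_neg at hmcb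
    have hmca : C.m c a ≠ 2 := hcperp.resolve_right (not_not.mpr hmcb)
    exact cox_aux C hrig L hsph hirr r hrL hno hfin hL3 c a b hcL haL hbL
      hca hab hcb hmca hmab (Or.inr hra) (Or.inl hra)
end

section
/- Let S be 3-rigid of type FC, let L ⊆ S be irreducible spherical with consecutive diagram vertices s, t, p, and let r ∈ S be distinct from and not adjacent to p. If {s,t} is not good with respect to r and either {t,p} is not good with respect to r or p is not good with respect to r, then L is exposed. -/
namespace CoxMat

variable {S : Type*} (C : CoxMat S)

lemma sameComp_refl {X : Set S} {a : S} (ha : a ∉ X) : C.SameComp X a a :=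
  ⟨ha, ha, .refl⟩

lemma sameComp_head {X : Set S} {a b c : S} (ha : a ∉ X) (hab : C.Adj a b)
    (h : C.SameComp X b c) : C.SameComp X a c :=
  ⟨ha, h.2.1, .head ⟨ha, h.1, hab⟩ h.2.2⟩

lemma master {X₁ X₂ D : Set S} {r : S}
    (hr1 : r ∉ X₁) (hr2 : r ∉ X₂)
    (H1 : ∀ v, v ∈ X₁ → v ∉ D → v ∉ X₂ ∧ ¬ C.SameComp X₂ v r)
    (H2 : ∀ v, v ∈ X₂ → v ∉ D → v ∉ X₁ ∧ ¬ C.SameComp X₁ v r) :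
    ∀ v, Relation.ReflTransGen (fun x y => x ∉ D ∧ y ∉ D ∧ C.Adj x y) v r →
      v ∉ X₁ ∧ v ∉ X₂ ∧ C.SameComp X₁ v r ∧ C.SameComp X₂ v r := by
  intro v h
  induction h using Relation.ReflTransGen.head_induction_on with
  | refl => exact ⟨hr1, hr2, C.sameComp_refl hr1, C.sameComp_refl hr2⟩
  | @head a b hstep htail ih =>
    obtain ⟨haD, hbD, hadj⟩ := hstep
    obtain ⟨ih1, ih2, ihc1, ihc2⟩ := ih
    have hv1 : a ∉ X₁ := fun hm =>
      (H1 a hm haD).2 (C.sameComp_head (H1 a hm haD).1 hadj ihc2)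
    have hv2 : a ∉ X₂ := fun hm =>
      (H2 a hm haD).2 (C.sameComp_head (H2 a hm haD).1 hadj ihc1)
    exact ⟨hv1, hv2, C.sameComp_head hv1 hadj ihc1, C.sameComp_head hv2 hadj ihc2⟩

lemma core (hrig : C.ThreeRigid) (L : Set S)
    (hsph : C.Spherical L) (hirr : C.Irred L) (s t p r : S)
    (hsL : s ∈ L) (htL : t ∈ L) (hpL : p ∈ L)
    (hst' : s ≠ t) (htp' : t ≠ p) (hsp' : s ≠ p)
    (hmst : C.m s t ≠ 2) (hmtp : C.m t p ≠ 2)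
    (hrL : r ∉ L) (hmrp : C.m r p = 0)
    (X₂ : Set S) (c₂ : S) (hc2 : c₂ = s ∨ c₂ = t)
    (hc2L : c₂ ∈ L) (hc2X2 : c₂ ∉ X₂) (hrX2 : r ∉ X₂)
    (sep₂ : ¬ C.SameComp X₂ c₂ r)
    (HX2 : ∀ v, v ≠ p → v ≠ t → C.m v p ≠ 2 → v ∉ X₂)
    (HX2' : ∀ v ∈ X₂, v ∉ ({s, t, p} : Set S) ∪ C.perp {s, t, p} → C.m v p = 2)
    (hgp : ¬ C.GoodPair L r s t) :
    C.Exposed L := by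
  have hadj : ∀ {a b : S}, a ∈ L → b ∈ L → a ≠ b → C.Adj a b :=
    fun ha hb hne => hsph ha hb hne
  have hrp : r ≠ p := by
    intro h
    rw [h, C.diag] at hmrp
    exact one_ne_zero hmrp
  have hc2r : c₂ ≠ r := fun h => hrL (h ▸ hc2L)
  have hpX1 : p ∉ ({s, t} : Set S) ∪ C.perp {s, t} := by
    intro h
    rcases h with h | h
    · rcases h with h | h
      · exact hsp' h.symm
      · rcases h with h
        exact htp' h.symm
    · have h2 := h.2 t (by simp)
      rw [C.symm] at h2
      exact hmtp h2
  have hrstr : ¬ C.Spherical {s, t, r} := by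
    intro hS
    have hadj2 : C.Adj c₂ r :=
      hS (by rcases hc2 with rfl | rfl <;> simp) (by simp) hc2r
    exact sep₂ (C.sameComp_head hc2X2 hadj2 (C.sameComp_refl hrX2))
  have hex1 : ∃ l ∈ L \ ({s, t} ∪ C.perp {s, t}),
      ¬ C.SameComp ({s, t} ∪ C.perp {s, t}) l r := by
    by_contra hcon
    push_neg at hcon
    exact hgp ⟨hrstr, ⟨p, hpL, hpX1⟩, hcon⟩
  obtain ⟨l₁, hl₁, hl₁r⟩ := hex1
  have sep1 : ∀ y ∈ L, y ∉ ({s, t} : Set S) ∪ C.perp {s, t} →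
      ¬ C.SameComp ({s, t} ∪ C.perp {s, t}) y r := by
    intro y hyL hyX hcomp
    apply hl₁r
    rcases eq_or_ne l₁ y with rfl | hne
    · exact hcomp
    · exact C.sameComp_head hl₁.2 (hadj hl₁.1 hyL hne) hcomp
  have sep1p := sep1 p hpL hpX1
  have hrX1 : r ∉ ({s, t} : Set S) ∪ C.perp {s, t} := by
    intro h
    have hadj2 : C.Adj c₂ r := by
      rcases h with h | h
      · rcases h with h | h
        · exact absurd (h ▸ hsL) hrL
        · rcases h with h
          exact absurd (h ▸ htL) hrL
      · have h2 : C.m r c₂ = 2 := h.2 c₂ (by rcases hc2 with rfl | rfl <;> simp)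
        refine C.adj_symm ⟨fun he => hc2r he.symm, ?_⟩
        rw [h2]; norm_num
    exact sep₂ (C.sameComp_head hc2X2 hadj2 (C.sameComp_refl hrX2))
  have hsub3 : ({s, t, p} : Set S) ⊆ L :=
    Set.insert_subset_iff.mpr ⟨hsL,
      Set.insert_subset_iff.mpr ⟨htL, Set.singleton_subset_iff.mpr hpL⟩⟩
  have hsphJ : C.Spherical {s, t, p} := hsph.mono hsub3
  have hirrJ : C.Irred {s, t, p} := by
    intro K hK hKne hsub
    by_cases htK : t ∈ K
    · have hsK : s ∈ K := by
        rcases hsub (show s ∈ ({s, t, p} : Set S) by simp) with h | h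
        · exact h
        · exact absurd (h.2 t htK) hmst
      have hpK : p ∈ K := by
        rcases hsub (show p ∈ ({s, t, p} : Set S) by simp) with h | h
        · exact h
        · have h2 := h.2 t htK
          rw [C.symm] at h2
          exact absurd h2 hmtp
      apply hK.2
      intro x hx
      rcases hx with rfl | hx
      · exact hsK
      rcases hx with rfl | hx
      · exact htK
      rcases hx with rfl
      exact hpK
    · rcases hsub (show t ∈ ({s, t, p} : Set S) by simp) with h | h
      · exact htK h
      · obtain ⟨k, hkK⟩ := hKne
        have hk3 := hK.1 hkK
        have h2 := h.2 k hkK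
        rcases hk3 with rfl | hk3
        · rw [C.symm] at h2
          exact hmst h2
        rcases hk3 with rfl | hk3
        · exact htK hkK
        rcases hk3 with rfl
        exact hmtp h2
  have hcard3 : ({s, t, p} : Set S).ncard = 3 :=
    Set.ncard_eq_three.mpr ⟨s, t, p, hst', hsp', htp', rfl⟩
  have hrD : r ∉ ({s, t, p} : Set S) ∪ C.perp {s, t, p} := by
    intro h
    rcases h with h | h
    · exact hrL (hsub3 h)
    · have h2 := h.2 p (by simp)
      rw [hmrp] at h2
      norm_num at h2
  have H1 : ∀ v, v ∈ ({s, t} : Set S) ∪ C.perp {s, t} →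
      v ∉ ({s, t, p} : Set S) ∪ C.perp {s, t, p} →
      v ∉ X₂ ∧ ¬ C.SameComp X₂ v r := by
    intro v hv hvD
    have hv' : v ∈ C.perp {s, t} := by
      rcases hv with hv | hv
      · exfalso
        apply hvD
        left
        rcases hv with rfl | hv
        · simp
        rcases hv with rfl
        simp
      · exact hv
    have hvs : C.m v s = 2 := hv'.2 s (by simp)
    have hvt : C.m v t = 2 := hv'.2 t (by simp)
    have hvnstp : v ∉ ({s, t, p} : Set S) := fun h => hvD (Or.inl h)
    have hvp : v ≠ p := fun h => hvnstp (by simp [h])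
    have hvt' : v ≠ t := fun h => hvnstp (by simp [h])
    have hvs' : v ≠ s := fun h => hvnstp (by simp [h])
    have hmvp : C.m v p ≠ 2 := by
      intro h
      apply hvD
      right
      refine ⟨hvnstp, ?_⟩
      intro j hj
      rcases hj with rfl | hj
      · exact hvs
      rcases hj with rfl | hj
      · exact hvt
      rcases hj with rfl
      exact h
    refine ⟨HX2 v hvp hvt' hmvp, fun hcomp => sep₂ (C.sameComp_head hc2X2 ?_ hcomp)⟩
    have h2 : C.m c₂ v = 2 := by
      rcases hc2 with rfl | rfl
      · rw [C.symm]; exact hvs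
      · rw [C.symm]; exact hvt
    have hne : c₂ ≠ v := by
      rcases hc2 with rfl | rfl
      · exact fun h => hvs' h.symm
      · exact fun h => hvt' h.symm
    exact ⟨hne, by rw [h2]; norm_num⟩
  have H2 : ∀ v, v ∈ X₂ →
      v ∉ ({s, t, p} : Set S) ∪ C.perp {s, t, p} →
      (v ∉ ({s, t} : Set S) ∪ C.perp {s, t}) ∧
        ¬ C.SameComp (({s, t} : Set S) ∪ C.perp {s, t}) v r := by
    intro v hv hvD
    have hmvp : C.m v p = 2 := HX2' v hv hvD
    have hvnstp : v ∉ ({s, t, p} : Set S) := fun h => hvD (Or.inl h)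
    have hvp : v ≠ p := fun h => hvnstp (by simp [h])
    have hmst' : C.m v s ≠ 2 ∨ C.m v t ≠ 2 := by
      by_contra hcon
      push_neg at hcon
      apply hvD
      right
      refine ⟨hvnstp, ?_⟩
      intro j hj
      rcases hj with rfl | hj
      · exact hcon.1
      rcases hj with rfl | hj
      · exact hcon.2
      rcases hj with rfl
      exact hmvp
    have hvX1 : v ∉ ({s, t} : Set S) ∪ C.perp {s, t} := by
      intro h
      rcases h with h | h
      · apply hvnstp
        rcases h with rfl | h
        · simp
        rcases h with rfl
        simp
      · rcases hmst' with h2 | h2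
        · exact h2 (h.2 s (by simp))
        · exact h2 (h.2 t (by simp))
    refine ⟨hvX1, fun hcomp => sep1p (C.sameComp_head hpX1 ?_ hcomp)⟩
    refine ⟨fun h => hvp h.symm, ?_⟩
    rw [C.symm, hmvp]; norm_num
  have hmaster := C.master hrX1 hrX2 H1 H2
  have hLeq : L = {s, t, p} := by
    refine Set.Subset.antisymm ?_ hsub3
    by_contra hnot
    have hss : ({s, t, p} : Set S) ⊂ L := by
      rw [Set.ssubset_iff_subset_ne]
      exact ⟨hsub3, fun h => hnot (by rw [← h])⟩
    have hns := hirr _ hss ⟨s, by simp⟩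
    rw [Set.not_subset] at hns
    obtain ⟨x, hxL, hxD⟩ := hns
    obtain ⟨-, -, hRTG⟩ := hrig {s, t, p} hsphJ hirrJ (le_of_eq hcard3.symm) x r hxD hrD
    obtain ⟨hx1, -, hc1, -⟩ := hmaster x hRTG
    exact sep1 x hxL hx1 hc1
  refine Or.inr ⟨by rw [hLeq]; exact hcard3, c₂, hc2L, p, hpL, ?_, ?_, ?_⟩
  · rcases hc2 with rfl | rfl
    · exact hsp'
    · exact htp'
  · intro k hk hAdjk
    rw [hLeq] at hk
    obtain ⟨-, -, hRTG⟩ := hrig {s, t, p} hsphJ hirrJ (le_of_eq hcard3.symm) k r hk hrD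
    obtain ⟨-, -, -, hkc2⟩ := hmaster k hRTG
    exact sep₂ (C.sameComp_head hc2X2 hAdjk hkc2)
  · intro k hk hAdjk
    rw [hLeq] at hk
    obtain ⟨-, -, hRTG⟩ := hrig {s, t, p} hsphJ hirrJ (le_of_eq hcard3.symm) k r hk hrD
    obtain ⟨-, -, hkc1, -⟩ := hmaster k hRTG
    exact sep1p (C.sameComp_head hpX1 hAdjk hkc1)

end CoxMat

/-- Let `S` be 3-rigid (of type FC), `L ⊆ S` irreducible spherical with consecutive
diagram vertices `s, t, p`, and `r ∈ S` distinct from and not adjacent to `p`. If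
`{s,t}` is not good with respect to `r`, and `{t,p}` is not good with respect to `r` or
`p` is not good with respect to `r`, then `L` is exposed. -/
theorem exposed_criteria2 {S : Type*} (C : CoxMat S)
    (hrig : C.ThreeRigid) (L : Set S)
    (hsph : C.Spherical L) (hirr : C.Irred L)
    (s t p r : S) (hcons : C.Consecutive L s t p)
    (hrp : r ≠ p) (hradj : ¬ C.Adj r p)
    (hst : ¬ C.GoodPair L r s t)
    (h2 : ¬ C.GoodPair L r t p ∨ ¬ C.GoodElt L r p) :
    C.Exposed L := by
  obtain ⟨hsL, htL, hpL, hst', htp', hsp', hmst, hmtp, hmsp⟩ := hcons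
  have hmrp : C.m r p = 0 := by
    by_contra h
    exact hradj ⟨hrp, h⟩
  have hrL : r ∉ L := fun h => hradj (hsph h hpL hrp)
  rcases h2 with hα | hβ
  · -- case α : ¬ GoodPair L r t p, contact vertex s, X₂ = {t,p} ∪ {t,p}^⊥
    have hsX2 : s ∉ ({t, p} : Set S) ∪ C.perp {t, p} := by
      intro h
      rcases h with h | h
      · rcases h with h | h
        · exact hst' h
        · rcases h with h
          exact hsp' h
      · exact hmst (h.2 t (by simp))
    have hrX2 : r ∉ ({t, p} : Set S) ∪ C.perp {t, p} := by
      intro h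
      rcases h with h | h
      · rcases h with h | h
        · exact hrL (h ▸ htL)
        · rcases h with h
          exact hrp h
      · have h2' := h.2 p (by simp)
        rw [hmrp] at h2'
        norm_num at h2'
    have hnsph : ¬ C.Spherical {t, p, r} := by
      intro hS
      have h3 : C.Adj p r := hS (by simp) (by simp) (Ne.symm hrp)
      exact hradj (C.adj_symm h3)
    have hex : ∃ l ∈ L \ ({t, p} ∪ C.perp {t, p}),
        ¬ C.SameComp ({t, p} ∪ C.perp {t, p}) l r := by
      by_contra hcon
      push_neg at hcon
      exact hα ⟨hnsph, ⟨s, hsL, hsX2⟩, hcon⟩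
    obtain ⟨l₂, hl₂, hl₂r⟩ := hex
    have sep2 : ¬ C.SameComp (({t, p} : Set S) ∪ C.perp {t, p}) s r := by
      intro hcomp
      apply hl₂r
      rcases eq_or_ne l₂ s with rfl | hne
      · exact hcomp
      · exact C.sameComp_head hl₂.2 (hsph hl₂.1 hsL hne) hcomp
    refine C.core hrig L hsph hirr s t p r hsL htL hpL hst' htp' hsp' hmst hmtp hrL hmrp
      (({t, p} : Set S) ∪ C.perp {t, p}) s (Or.inl rfl) hsL hsX2 hrX2 sep2 ?_ ?_ hst
    · intro v hvp hvt hmvp h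
      rcases h with h | h
      · rcases h with h | h
        · exact hvt h
        · rcases h with h
          exact hvp h
      · exact hmvp (h.2 p (by simp))
    · intro v hv hvD
      rcases hv with hv | hv
      · exfalso
        apply hvD
        left
        rcases hv with rfl | hv
        · simp
        rcases hv with rfl
        simp
      · exact hv.2 p (by simp)
  · -- case β : ¬ GoodElt L r p, contact vertex t, X₂ = {p} ∪ {p}^⊥
    have htX2 : t ∉ ({p} : Set S) ∪ C.perp {p} := by
      intro h
      rcases h with h | h
      · rcases h with h
        exact htp' h
      · exact hmtp (h.2 p (by simp))
    have hrX2 : r ∉ ({p} : Set S) ∪ C.perp {p} := by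
      intro h
      rcases h with h | h
      · rcases h with h
        exact hrp h
      · have h2' := h.2 p (by simp)
        rw [hmrp] at h2'
        norm_num at h2'
    have hex : ∃ l ∈ L \ ({p} ∪ C.perp {p}),
        ¬ C.SameComp ({p} ∪ C.perp {p}) l r := by
      by_contra hcon
      push_neg at hcon
      exact hβ ⟨hrp, hradj, ⟨t, htL, htX2⟩, hcon⟩
    obtain ⟨l₂, hl₂, hl₂r⟩ := hex
    have sep2 : ¬ C.SameComp (({p} : Set S) ∪ C.perp {p}) t r := by
      intro hcomp
      apply hl₂r
      rcases eq_or_ne l₂ t with rfl | hne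
      · exact hcomp
      · exact C.sameComp_head hl₂.2 (hsph hl₂.1 htL hne) hcomp
    refine C.core hrig L hsph hirr s t p r hsL htL hpL hst' htp' hsp' hmst hmtp hrL hmrp
      (({p} : Set S) ∪ C.perp {p}) t (Or.inr rfl) htL htX2 hrX2 sep2 ?_ ?_ hst
    · intro v hvp hvt hmvp h
      rcases h with h | h
      · rcases h with h
        exact hvp h
      · exact hmvp (h.2 p (by simp))
    · intro v hv hvD
      rcases hv with hv | hv
      · exfalso
        apply hvD
        left
        rcases hv with rfl
        simp
      · exact hv.2 p (by simp)
end

section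
/- Let τ be an elementary twist of a 3-rigid Coxeter generating set S of type FC, performed with respect to J = {s,t} with m_{st} odd. Let L be a maximal irreducible subset of a maximal spherical subset of S with |L| = 3 and L exposed, and L contained in A ∪ {s,t} ∪ {s,t}^⊥ (so L_τ = L as a set). Then L is exposed in τ(S); in particular, if {s,t} ∩ L = ∅ then (L_τ)^⊥ in τ(S) equals τ(L^⊥). -/
open scoped Classical

variable {B W : Type} [Group W]

/-- A subset `J` of the index set is spherical if the standard parabolic subgroup it
generates is finite. -/
def SphericalIdx {M : CoxeterMatrix B} (cs : CoxeterSystem M W) (J : Set B) : Prop :=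
  Set.Finite ((Subgroup.closure (cs.simple '' J) : Subgroup W) : Set W)

/-- A Coxeter system is of type FC if every subset of pairwise adjacent indices is
spherical. -/
def IsFC {M : CoxeterMatrix B} (cs : CoxeterSystem M W) : Prop :=
  ∀ J : Set B, (∀ a ∈ J, ∀ b ∈ J, a ≠ b → M a b ≠ 0) → SphericalIdx cs J

/-- `J^⊥` at the level of the index set. -/
def perpIdx (M : CoxeterMatrix B) (J : Set B) : Set B :=
  {a | a ∉ J ∧ ∀ j ∈ J, M a j = 2}

/-- `J` is irreducible. -/
def IrredIdx (M : CoxeterMatrix B) (J : Set B) : Prop :=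
  ∀ K : Set B, K ⊂ J → K.Nonempty → ¬ J ⊆ K ∪ perpIdx M K

/-- `a, b` lie in the same component of the defining graph induced on the complement
of `X`. -/
def SameCompIdx (M : CoxeterMatrix B) (X : Set B) (a b : B) : Prop :=
  a ∉ X ∧ b ∉ X ∧
    Relation.ReflTransGen (fun x y => x ∉ X ∧ y ∉ X ∧ x ≠ y ∧ M x y ≠ 0) a b

/-- `S` is 3-rigid: no irreducible spherical (here: pairwise adjacent) subset of size
`≥ 3` weakly separates the defining graph. -/
def ThreeRigidIdx (M : CoxeterMatrix B) : Prop :=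
  ∀ J : Set B, (∀ a ∈ J, ∀ b ∈ J, a ≠ b → M a b ≠ 0) → IrredIdx M J → 3 ≤ J.ncard →
    ∀ a b : B, a ∉ J ∪ perpIdx M J → b ∉ J ∪ perpIdx M J →
      SameCompIdx M (J ∪ perpIdx M J) a b

/-- `L` (with `|L| = 3`) is exposed in `S` (index level): at least two elements of `L`
are adjacent to no element of `S ∖ (L ∪ L^⊥)`. -/
def ExposedIdx (M : CoxeterMatrix B) (L : Set B) : Prop :=
  L.ncard ≤ 2 ∨ (L.ncard = 3 ∧ ∃ a ∈ L, ∃ b ∈ L, a ≠ b ∧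
    (∀ k, k ∉ L ∪ perpIdx M L → ¬ (a ≠ k ∧ M a k ≠ 0)) ∧
    (∀ k, k ∉ L ∪ perpIdx M L → ¬ (b ≠ k ∧ M b k ≠ 0)))

/-- For a subset `G ⊆ W` of involutions regarded as a Coxeter generating set, and
`T ⊆ G`, the commuting complement of `T` in `G`. -/
def perpW (G T : Set W) : Set W := {x ∈ G | x ∉ T ∧ ∀ u ∈ T, Commute x u}

/-- `L` is exposed with respect to the generating set `G ⊆ W`: `|L| ≤ 2`, or `|L| = 3`
and at least two elements of `L` are adjacent (in the defining graph of `G`: pairs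
generating finite subgroups) to no element of `G ∖ (L ∪ L^⊥)`. -/
def ExposedW (G L : Set W) : Prop :=
  L.ncard ≤ 2 ∨ (L.ncard = 3 ∧ ∃ a ∈ L, ∃ b ∈ L, a ≠ b ∧
    (∀ k ∈ G \ (L ∪ perpW G L), ¬ IsOfFinOrder (a * k)) ∧
    (∀ k ∈ G \ (L ∪ perpW G L), ¬ IsOfFinOrder (b * k)))


namespace CoxTwistAux

noncomputable section

variable {B : Type}

abbrev V (B : Type) := B →₀ ℝ

/-- pairing against row `i` of the form matrix `k`. -/
def ip (k : B → B → ℝ) (i : B) : V B →ₗ[ℝ] ℝ := Finsupp.linearCombination ℝ (k i)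

@[simp] lemma ip_single (k : B → B → ℝ) (i j : B) (x : ℝ) :
    ip k i (Finsupp.single j x) = x * k i j := by
  simp [ip, Finsupp.linearCombination_single, smul_eq_mul]

/-- the reflection in `e i` w.r.t. the form `k`. -/
def sigma (k : B → B → ℝ) (i : B) : Module.End ℝ (V B) :=
  LinearMap.id - (2 : ℝ) • (ip k i).smulRight (Finsupp.single i 1)

lemma sigma_apply (k : B → B → ℝ) (i : B) (v : V B) :
    sigma k i v = v - (2 * ip k i v) • Finsupp.single i (1:ℝ) := by
  simp [sigma, mul_smul]

/-- the bilinear form. -/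
def Qf (k : B → B → ℝ) : V B →ₗ[ℝ] V B →ₗ[ℝ] ℝ :=
  Finsupp.linearCombination ℝ (fun i => ip k i)

@[simp] lemma Qf_single_left (k : B → B → ℝ) (i : B) (x : ℝ) (v : V B) :
    Qf k (Finsupp.single i x) v = x * ip k i v := by
  simp [Qf, Finsupp.linearCombination_single, smul_eq_mul]

lemma Qf_symm (k : B → B → ℝ) (hsymm : ∀ i j, k i j = k j i) (u v : V B) :
    Qf k u v = Qf k v u := by
  induction u using Finsupp.induction_linear with
  | zero => simp
  | add u₁ u₂ h1 h2 => simp [map_add, h1, h2]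
  | single i a =>
    induction v using Finsupp.induction_linear with
    | zero => simp
    | add v₁ v₂ g1 g2 => simp [map_add, g1, g2]
    | single j b => simp [hsymm i j]; ring

lemma sigma_invol (k : B → B → ℝ) (i : B) (hd : k i i = 1) (v : V B) :
    sigma k i (sigma k i v) = v := by
  rw [sigma_apply, sigma_apply, map_sub, map_smul, ip_single, hd]
  simp only [smul_eq_mul]
  module

lemma Qf_sigma_invar (k : B → B → ℝ) (hsymm : ∀ i j, k i j = k j i) (i : B)
    (hd : k i i = 1) (u v : V B) :
    Qf k (sigma k i u) (sigma k i v) = Qf k u v := by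
  have h1 : ∀ w : V B, Qf k w (Finsupp.single i (1:ℝ)) = ip k i w := by
    intro w
    rw [Qf_symm k hsymm, Qf_single_left, one_mul]
  rw [sigma_apply, sigma_apply]
  simp only [map_sub, map_smul, LinearMap.sub_apply, LinearMap.smul_apply, h1,
    Qf_single_left, ip_single, hd, smul_eq_mul]
  ring

/-- coefficient sequences for powers of a product of two reflections. -/
def coefs (c : ℝ) : ℕ → ℝ × ℝ × ℝ × ℝ
  | 0 => (0, 0, 0, 0)
  | n+1 =>
    let r := coefs c n
    ( -2 - r.1 + 2*c*(2*c*r.1 - r.2.2.1),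
      -r.2.1 + 2*c*(-2 - r.2.2.2 + 2*c*r.2.1),
      2*c*r.1 - r.2.2.1,
      -2 - r.2.2.2 + 2*c*r.2.1)

lemma cos_id (c θ : ℝ) (hc : c = Real.cos θ) (x : ℝ) :
    Real.cos (x + θ) + Real.cos (x - θ) = 2 * c * Real.cos x := by
  rw [Real.cos_add, Real.cos_sub, hc]; ring

/-- closed form of `coefs`. -/
lemma coefs_closed (m : ℕ) (hm : 2 ≤ m) :
    ∀ n : ℕ, coefs (Real.cos (Real.pi / m)) n =
      (((Real.cos ((2*n) * (Real.pi/m)) - 1) / (Real.sin (Real.pi/m))^2),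
       ((Real.cos ((2*n) * (Real.pi/m) + (Real.pi/m)) - Real.cos (Real.pi/m)) / (Real.sin (Real.pi/m))^2),
       ((Real.cos ((2*n) * (Real.pi/m) - (Real.pi/m)) - Real.cos (Real.pi/m)) / (Real.sin (Real.pi/m))^2),
       ((Real.cos ((2*n) * (Real.pi/m)) - 1) / (Real.sin (Real.pi/m))^2)) := by
  set θ := Real.pi / m with hθ
  set c := Real.cos θ with hc
  set S := Real.sin θ with hS
  have hmR : (2:ℝ) ≤ (m:ℝ) := by exact_mod_cast hm
  have hm0 : (0:ℝ) < (m:ℝ) := by linarith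
  have hθpos : 0 < θ := div_pos Real.pi_pos hm0
  have hθlt : θ < Real.pi := by
    rw [hθ, div_lt_iff₀ hm0]
    nlinarith [Real.pi_pos]
  have hSpos : 0 < S := Real.sin_pos_of_pos_of_lt_pi hθpos hθlt
  have hS0 : S ≠ 0 := ne_of_gt hSpos
  have hS2 : S^2 = 1 - c^2 := by
    have := Real.sin_sq_add_cos_sq θ
    rw [← hc, ← hS] at this; nlinarith [this]
  intro n
  induction n with
  | zero =>
    simp only [coefs, Nat.cast_zero]
    rw [show 2*(0:ℝ)*θ = 0 from by ring]
    rw [show (0:ℝ) + θ = θ from by ring, show (0:ℝ) - θ = -θ from by ring,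
      Real.cos_neg, Real.cos_zero]
    norm_num
    rw [hc, sub_self, zero_div]
  | succ n ih =>
    have key := cos_id c θ hc
    have e1 : (2*((n:ℝ)+1)) * θ = ((2*n)*θ + θ) + θ := by ring
    have e2 : (2*((n:ℝ)+1)) * θ + θ = (((2*n)*θ + θ) + θ) + θ := by ring
    have e3 : (2*((n:ℝ)+1)) * θ - θ = (2*n)*θ + θ := by ring
    rw [coefs, ih]
    have k1 := key ((2*(n:ℝ))*θ)
    have k2 := key ((2*(n:ℝ))*θ + θ)
    have k3 := key (((2*(n:ℝ))*θ + θ) + θ)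
    rw [show ((2*(n:ℝ))*θ + θ) - θ = (2*n)*θ by ring] at k2
    rw [show (((2*(n:ℝ))*θ + θ) + θ) - θ = (2*n)*θ + θ by ring] at k3
    push_cast
    rw [e2, e3, e1]
    refine Prod.ext ?_ (Prod.ext ?_ (Prod.ext ?_ ?_)) <;> simp only <;> field_simp
    · linear_combination (norm := ring_nf) (-1)*(2*c*k1 + k2 + 2*hS2)
    · linear_combination (norm := ring_nf) (-1)*(k3 + 2*c*k2 + 4*c*hS2)
    · linear_combination (norm := ring_nf) (-1)*k1
    · linear_combination (norm := ring_nf) (-1)*(k2 + 2*hS2)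

lemma coefs1 (c : ℝ) (n : ℕ) : (coefs c (n+1)).1
    = -2 - (coefs c n).1 + 2*c*(2*c*(coefs c n).1 - (coefs c n).2.2.1) := rfl
lemma coefs2 (c : ℝ) (n : ℕ) : (coefs c (n+1)).2.1
    = -(coefs c n).2.1 + 2*c*(-2 - (coefs c n).2.2.2 + 2*c*(coefs c n).2.1) := rfl
lemma coefs3 (c : ℝ) (n : ℕ) : (coefs c (n+1)).2.2.1
    = 2*c*(coefs c n).1 - (coefs c n).2.2.1 := rfl
lemma coefs4 (c : ℝ) (n : ℕ) : (coefs c (n+1)).2.2.2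
    = -2 - (coefs c n).2.2.2 + 2*c*(coefs c n).2.1 := rfl

lemma twostep (k : B → B → ℝ) (i j : B) (c : ℝ)
    (hii : k i i = 1) (hjj : k j j = 1) (hij : k i j = -c) (hji : k j i = -c)
    (v : V B) (p q : ℝ) :
    (sigma k i * sigma k j) (v + p • (Finsupp.single i (1:ℝ)) + q • (Finsupp.single j (1:ℝ)))
      = v + (-2*(ip k i v) - p + 2*c*(-2*(ip k j v) + 2*c*p - q)) • (Finsupp.single i (1:ℝ))
          + (-2*(ip k j v) + 2*c*p - q) • (Finsupp.single j (1:ℝ)) := by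
  have hj : ip k j (v + p • (Finsupp.single i (1:ℝ)) + q • (Finsupp.single j (1:ℝ)))
      = ip k j v - c*p + q := by
    rw [map_add, map_add, map_smul, map_smul, ip_single, ip_single, hjj, hji]
    simp only [smul_eq_mul]; ring
  have e1 : sigma k j (v + p • (Finsupp.single i (1:ℝ)) + q • (Finsupp.single j (1:ℝ)))
      = v + p • (Finsupp.single i (1:ℝ))
          + (-2*(ip k j v) + 2*c*p - q) • (Finsupp.single j (1:ℝ)) := by
    rw [sigma_apply, hj]; module
  have hi : ip k i (v + p • (Finsupp.single i (1:ℝ))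
        + (-2*(ip k j v) + 2*c*p - q) • (Finsupp.single j (1:ℝ)))
      = ip k i v + p + (-2*(ip k j v) + 2*c*p - q) * (-c) := by
    rw [map_add, map_add, map_smul, map_smul, ip_single, ip_single, hii, hij]
    simp only [smul_eq_mul]; ring
  rw [Module.End.mul_apply, e1, sigma_apply, hi]
  module

lemma sigma_pow_apply (k : B → B → ℝ) (i j : B) (c : ℝ)
    (hii : k i i = 1) (hjj : k j j = 1) (hij : k i j = -c) (hji : k j i = -c)
    (v : V B) : ∀ n : ℕ,
    ((sigma k i * sigma k j)^n) v
      = v + ((ip k i v) * (coefs c n).1 + (ip k j v) * (coefs c n).2.1) • (Finsupp.single i (1:ℝ))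
          + ((ip k i v) * (coefs c n).2.2.1 + (ip k j v) * (coefs c n).2.2.2) • (Finsupp.single j (1:ℝ)) := by
  intro n
  induction n with
  | zero => simp [coefs]
  | succ n ih =>
    rw [pow_succ']
    rw [Module.End.mul_apply, ih, twostep k i j c hii hjj hij hji]
    rw [coefs1, coefs2, coefs3, coefs4]
    module

lemma sigma_pow_eq_one (k : B → B → ℝ) (i j : B) (m : ℕ) (hm : 2 ≤ m)
    (hii : k i i = 1) (hjj : k j j = 1)
    (hij : k i j = -Real.cos (Real.pi / m)) (hji : k j i = k i j) :
    (sigma k i * sigma k j)^m = 1 := by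
  set θ := Real.pi / m with hθ
  have hm0 : (m:ℝ) ≠ 0 := by
    have : (0:ℝ) < (m:ℝ) := by exact_mod_cast (by omega : 0 < m)
    linarith
  have hclosed := coefs_closed m hm m
  rw [← hθ] at hclosed
  have h2pi : (2*(m:ℝ)) * θ = 2 * Real.pi := by
    rw [hθ]; field_simp
  rw [h2pi] at hclosed
  have hcos1 : Real.cos (2 * Real.pi) = 1 := Real.cos_two_pi
  have hcos2 : Real.cos (2 * Real.pi + θ) = Real.cos θ := by
    rw [add_comm]; exact Real.cos_add_two_pi θ
  have hcos3 : Real.cos (2 * Real.pi - θ) = Real.cos θ := Real.cos_two_pi_sub θ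
  rw [hcos1, hcos2, hcos3] at hclosed
  simp only [sub_self, zero_div] at hclosed
  apply LinearMap.ext
  intro v
  rw [sigma_pow_apply k i j (Real.cos θ) hii hjj (by rw [hij]) (by rw [hji, hij]) v m,
    hclosed]
  simp

/-- the two-reflection power coefficient sequence. -/
def pqseq (κ : ℝ) : ℕ → ℝ × ℝ
  | 0 => (0,1)
  | n+1 => ((4*κ^2-1)*(pqseq κ n).1 + 2*κ*(pqseq κ n).2,
            -(2*κ)*(pqseq κ n).1 - (pqseq κ n).2)

lemma pqseq_rec2 (κ : ℝ) (n : ℕ) :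
    (pqseq κ (n+2)).1 = (4*κ^2-2)*(pqseq κ (n+1)).1 - (pqseq κ n).1 := by
  simp only [pqseq]; ring

lemma pqseq_big (κ : ℝ) (hκ : 1 ≤ κ^2) :
    ∀ n, 2 ≤ |(pqseq κ (n+1)).1| ∧ |(pqseq κ (n+1)).1| ≤ |(pqseq κ (n+2)).1| := by
  have habs : 1 ≤ |κ| := by nlinarith [abs_nonneg κ, sq_abs κ]
  have hc : (2:ℝ) ≤ 4*κ^2 - 2 := by nlinarith
  intro n
  induction n with
  | zero =>
    have h1 : (pqseq κ 1).1 = 2*κ := by simp [pqseq]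
    have h1a : |(pqseq κ 1).1| = 2*|κ| := by rw [h1, abs_mul, abs_two]
    constructor
    · rw [h1a]; linarith
    · rw [pqseq_rec2 κ 0]
      have h0 : (pqseq κ 0).1 = 0 := rfl
      rw [h0, sub_zero, abs_mul, abs_of_nonneg (by linarith : (0:ℝ) ≤ 4*κ^2-2)]
      nlinarith [abs_nonneg ((pqseq κ 1).1)]
  | succ n ih =>
    obtain ⟨ih1, ih2⟩ := ih
    have key : 2*|(pqseq κ (n+2)).1| - |(pqseq κ (n+1)).1| ≤ |(pqseq κ (n+3)).1| := by
      rw [pqseq_rec2 κ (n+1)]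
      have t1 : |(4*κ^2-2)*(pqseq κ (n+2)).1| - |(pqseq κ (n+1)).1|
          ≤ |(4*κ^2-2)*(pqseq κ (n+2)).1 - (pqseq κ (n+1)).1| :=
        abs_sub_abs_le_abs_sub _ _
      rw [abs_mul, abs_of_nonneg (by linarith : (0:ℝ) ≤ 4*κ^2-2)] at t1
      nlinarith [abs_nonneg ((pqseq κ (n+2)).1)]
    constructor
    · linarith
    · linarith

/-- Core: a product of two "reflections" meeting with `|κ| ≥ 1` never has a trivial
positive power. -/
lemma core_infinite (k : B → B → ℝ) (hsymm : ∀ i j, k i j = k j i)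
    (rA rB : Module.End ℝ (V B)) (α β : V B)
    (hrA : ∀ v, rA v = v - (2 * Qf k α v) • α)
    (hrB : ∀ v, rB v = v - (2 * Qf k β v) • β)
    (hαα : Qf k α α = 1) (hββ : Qf k β β = 1)
    (hκ : 1 ≤ (Qf k α β)^2)
    (i₀ : B) (h1 : α i₀ = 1) (h0 : β i₀ = 0) :
    ∀ n : ℕ, (rA * rB)^(n+1) ≠ 1 := by
  set κ := Qf k α β with hκdef
  have hβα : Qf k β α = κ := by rw [hκdef, Qf_symm k hsymm]
  have vec : ∀ n : ℕ, ((rA * rB)^n) β = (pqseq κ n).1 • α + (pqseq κ n).2 • β := by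
    intro n
    induction n with
    | zero => simp [pqseq]
    | succ n ih =>
      rw [pow_succ', Module.End.mul_apply, ih, Module.End.mul_apply]
      have hQB : Qf k β ((pqseq κ n).1 • α + (pqseq κ n).2 • β)
          = (pqseq κ n).1 * κ + (pqseq κ n).2 := by
        rw [map_add, map_smul, map_smul, hβα, hββ]
        simp only [smul_eq_mul]; ring
      have eB : rB ((pqseq κ n).1 • α + (pqseq κ n).2 • β)
          = (pqseq κ n).1 • α + (-(2*κ)*(pqseq κ n).1 - (pqseq κ n).2) • β := by
        rw [hrB, hQB]; module
      rw [eB]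
      have hQA : Qf k α ((pqseq κ n).1 • α + (-(2*κ)*(pqseq κ n).1 - (pqseq κ n).2) • β)
          = (pqseq κ n).1 + (-(2*κ)*(pqseq κ n).1 - (pqseq κ n).2) * κ := by
        rw [map_add, map_smul, map_smul, hαα, ← hκdef]
        simp only [smul_eq_mul]; ring
      rw [hrA, hQA]
      have h1' : (pqseq κ (n+1)).1 = (4*κ^2-1)*(pqseq κ n).1 + 2*κ*(pqseq κ n).2 := rfl
      have h2' : (pqseq κ (n+1)).2 = -(2*κ)*(pqseq κ n).1 - (pqseq κ n).2 := rfl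
      rw [h1', h2']
      module
  intro n hcontra
  have hv := vec (n+1)
  rw [hcontra, Module.End.one_apply] at hv
  have := congrArg (fun f : V B => f i₀) hv
  simp only [Finsupp.add_apply, Finsupp.smul_apply, h0, h1, smul_eq_mul, mul_one,
    mul_zero, add_zero] at this
  have hbig := (pqseq_big κ hκ n).1
  rw [← this] at hbig
  norm_num at hbig

end

end CoxTwistAux

namespace CoxTwistAux

noncomputable section

open CoxeterSystem

variable {B W : Type} [Group W]

/-- the standard geometric-representation form values. -/
def stdk (M : CoxeterMatrix B) : B → B → ℝ :=
  fun i j => if i = j then 1 else -Real.cos (Real.pi / (M i j : ℝ))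

lemma stdk_symm (M : CoxeterMatrix B) (i j : B) : stdk M i j = stdk M j i := by
  unfold stdk
  by_cases h : i = j
  · subst h; simp
  · rw [if_neg h, if_neg (Ne.symm h), M.symmetric]

lemma stdk_diag (M : CoxeterMatrix B) (i : B) : stdk M i i = 1 := by simp [stdk]

lemma stdk_compat (M : CoxeterMatrix B) (i j : B) (h : i ≠ j) :
    stdk M i j = -Real.cos (Real.pi / (M i j : ℝ)) := by simp [stdk, h]

lemma stdk_zero (M : CoxeterMatrix B) (i j : B) (h : i ≠ j) (h0 : M i j = 0) :
    stdk M i j = -1 := by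
  rw [stdk_compat M i j h, h0]
  norm_num

lemma stdk_bound (M : CoxeterMatrix B) (i j : B) : |stdk M i j| ≤ 1 := by
  unfold stdk
  by_cases h : i = j
  · rw [if_pos h]; norm_num
  · rw [if_neg h, abs_neg]
    exact Real.abs_cos_le_one _

lemma stdk_neg (M : CoxeterMatrix B) (i j : B) (h : i ≠ j) (h2 : M i j ≠ 2) :
    stdk M i j < 0 := by
  have h1 : M i j ≠ 1 := M.off_diagonal i j h
  rw [stdk_compat M i j h, neg_lt_zero]
  rcases Nat.eq_zero_or_pos (M i j) with h0 | hpos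
  · rw [h0]; norm_num
  · have h3 : 3 ≤ M i j := by omega
    have h3R : (3:ℝ) ≤ (M i j : ℝ) := by exact_mod_cast h3
    apply Real.cos_pos_of_mem_Ioo
    constructor
    · have : 0 < Real.pi / (M i j : ℝ) := by positivity
      nlinarith [Real.pi_pos]
    · rw [div_lt_iff₀ (by linarith : (0:ℝ) < (M i j : ℝ))]
      nlinarith [Real.pi_pos]

/-- Existence of the reflection representation associated to an admissible form. -/
lemma exists_F {M : CoxeterMatrix B} (cs : CoxeterSystem M W) (k : B → B → ℝ)
    (hsymm : ∀ i j, k i j = k j i) (hdiag : ∀ i, k i i = 1)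
    (hcompat : ∀ i j, i ≠ j → 2 ≤ M i j → k i j = -Real.cos (Real.pi / (M i j : ℝ))) :
    ∃ F : W →* Module.End ℝ (V B), ∀ i, F (cs.simple i) = sigma k i := by
  have hlift : M.IsLiftable (fun i => sigma k i) := by
    intro i j
    by_cases hij : i = j
    · subst hij
      rw [M.diagonal i, pow_one]
      apply LinearMap.ext
      intro v
      rw [Module.End.mul_apply, Module.End.one_apply, sigma_invol k i (hdiag i)]
    · rcases Nat.lt_or_ge (M i j) 2 with hlt | hge
      · interval_cases h : M i j
        · rw [pow_zero]
        · exact absurd h (M.off_diagonal i j hij)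
      · exact sigma_pow_eq_one k i j (M i j) hge (hdiag i) (hdiag j)
          (hcompat i j hij hge) (by rw [hsymm j i])
  exact ⟨cs.lift ⟨fun i => sigma k i, hlift⟩, fun i => cs.lift_apply_simple hlift i⟩

lemma F_invar {M : CoxeterMatrix B} (cs : CoxeterSystem M W) (k : B → B → ℝ)
    (hsymm : ∀ i j, k i j = k j i) (hdiag : ∀ i, k i i = 1)
    (F : W →* Module.End ℝ (V B)) (hF : ∀ i, F (cs.simple i) = sigma k i)
    (g : W) : ∀ u v : V B, Qf k (F g u) (F g v) = Qf k u v := by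
  apply cs.simple_induction (p := fun g => ∀ u v : V B, Qf k (F g u) (F g v) = Qf k u v) g
  · intro i u v
    rw [hF i]
    exact Qf_sigma_invar k hsymm i (hdiag i) u v
  · intro u v
    simp
  · intro w w' hw hw' u v
    rw [map_mul]
    have : ∀ z : V B, (F w * F w') z = F w (F w' z) := fun z => rfl
    rw [this, this, hw, hw']

lemma sigma_as_refl (k : B → B → ℝ) (i : B) (v : V B) :
    sigma k i v = v - (2 * Qf k (Finsupp.single i (1:ℝ)) v) • Finsupp.single i (1:ℝ) := by
  rw [sigma_apply, Qf_single_left, one_mul]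

/-- K1: a pair with `M i j = 0` generates an infinite dihedral group. -/
lemma K1 {M : CoxeterMatrix B} (cs : CoxeterSystem M W) (i j : B) (hij : i ≠ j)
    (h0 : M i j = 0) : ¬ IsOfFinOrder (cs.simple i * cs.simple j) := by
  obtain ⟨F, hF⟩ := exists_F cs (stdk M) (stdk_symm M) (stdk_diag M)
    (fun i j h _ => stdk_compat M i j h)
  intro hfin
  obtain ⟨n, hn, hpow⟩ := isOfFinOrder_iff_pow_eq_one.mp hfin
  have hEnd : (sigma (stdk M) i * sigma (stdk M) j)^n = 1 := by
    rw [← hF i, ← hF j, ← map_mul, ← map_pow, hpow, map_one]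
  have hcore := core_infinite (stdk M) (stdk_symm M)
    (sigma (stdk M) i) (sigma (stdk M) j)
    (Finsupp.single i (1:ℝ)) (Finsupp.single j (1:ℝ))
    (sigma_as_refl (stdk M) i) (sigma_as_refl (stdk M) j)
    (by rw [Qf_single_left, one_mul, ip_single, one_mul, stdk_diag])
    (by rw [Qf_single_left, one_mul, ip_single, one_mul, stdk_diag])
    (by rw [Qf_single_left, one_mul, ip_single, one_mul, stdk_zero M i j hij h0]; norm_num)
    i (Finsupp.single_eq_same) (Finsupp.single_eq_of_ne' (Ne.symm hij))
    (n - 1)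
  rw [Nat.sub_add_cancel hn] at hcore
  exact hcore hEnd

/-- K3: distinct simple reflections are distinct group elements. -/
lemma K3 {M : CoxeterMatrix B} (cs : CoxeterSystem M W) (i j : B) (hij : i ≠ j) :
    cs.simple i ≠ cs.simple j := by
  obtain ⟨F, hF⟩ := exists_F cs (stdk M) (stdk_symm M) (stdk_diag M)
    (fun i j h _ => stdk_compat M i j h)
  intro h
  have hσ : sigma (stdk M) i = sigma (stdk M) j := by rw [← hF i, ← hF j, h]
  have h1 := congrArg (fun φ : Module.End ℝ (V B) => (φ (Finsupp.single j (1:ℝ))) j) hσ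
  simp only [sigma_apply, ip_single, one_mul, Finsupp.sub_apply, Finsupp.smul_apply,
    Finsupp.single_eq_same, Finsupp.single_eq_of_ne (Ne.symm hij),
    Finsupp.single_eq_of_ne hij, smul_eq_mul,
    mul_zero, sub_zero, mul_one, stdk_diag] at h1
  norm_num at h1

/-- K2: if two distinct simple reflections commute, the matrix entry is 2. -/
lemma K2 {M : CoxeterMatrix B} (cs : CoxeterSystem M W) (i j : B) (hij : i ≠ j)
    (hcomm : Commute (cs.simple i) (cs.simple j)) : M i j = 2 := by
  by_contra h2
  obtain ⟨F, hF⟩ := exists_F cs (stdk M) (stdk_symm M) (stdk_diag M)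
    (fun i j h _ => stdk_compat M i j h)
  set c : ℝ := -(stdk M i j) with hcdef
  have hcpos : 0 < c := by
    rw [hcdef, neg_pos]
    exact stdk_neg M i j hij h2
  have hij' : stdk M i j = -c := by rw [hcdef, neg_neg]
  have hji' : stdk M j i = -c := by rw [stdk_symm M j i, hij']
  have hsq : (cs.simple i * cs.simple j)^2 = 1 := by
    rw [pow_two]
    calc cs.simple i * cs.simple j * (cs.simple i * cs.simple j)
        = cs.simple i * (cs.simple j * cs.simple i) * cs.simple j := by group
      _ = cs.simple i * (cs.simple i * cs.simple j) * cs.simple j := by rw [← hcomm]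
      _ = (cs.simple i * cs.simple i) * (cs.simple j * cs.simple j) := by group
      _ = 1 := by rw [cs.simple_mul_simple_self, cs.simple_mul_simple_self, one_mul]
  have hEnd : (sigma (stdk M) i * sigma (stdk M) j)^2 = 1 := by
    rw [← hF i, ← hF j, ← map_mul, ← map_pow, hsq, map_one]
  have happ := congrArg
    (fun φ : Module.End ℝ (V B) => (φ (Finsupp.single j (1:ℝ))) j) hEnd
  rw [sigma_pow_apply (stdk M) i j c (stdk_diag M i) (stdk_diag M j) hij' hji'] at happ
  simp only [ip_single, one_mul, hij', stdk_diag, Module.End.one_apply,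
    Finsupp.add_apply, Finsupp.smul_apply, Finsupp.single_eq_same,
    Finsupp.single_eq_of_ne (Ne.symm hij), Finsupp.single_eq_of_ne hij,
    smul_eq_mul, mul_zero, add_zero, mul_one] at happ
  have e1 : coefs c 1 = (-2, -4*c, 0, -2) := by
    have h : coefs c 1 = (-2 - 0 + 2*c*(2*c*0-0), -0 + 2*c*(-2 - 0 + 2*c*0),
        2*c*0-0, -2-0+2*c*0) := rfl
    rw [h]; norm_num; ring
  have h23 : (coefs c 2).2.2.1 = -4*c := by
    show (coefs c (1+1)).2.2.1 = -4*c
    rw [coefs3, e1]; dsimp only; ring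
  have h24 : (coefs c 2).2.2.2 = -8*c^2 := by
    show (coefs c (1+1)).2.2.2 = -8*c^2
    rw [coefs4, e1]; dsimp only; ring
  rw [h23, h24] at happ
  nlinarith [happ, hcpos]

lemma mem_alternatingWord_cases :
    ∀ (n : ℕ) (i i' x : B), x ∈ CoxeterSystem.alternatingWord i i' n → x = i ∨ x = i' := by
  intro n
  induction n with
  | zero => intro i i' x hx; simp [CoxeterSystem.alternatingWord] at hx
  | succ n ih =>
    intro i i' x hx
    rw [CoxeterSystem.alternatingWord_succ, List.concat_eq_append, List.mem_append] at hx
    rcases hx with hx | hx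
    · exact (ih i' i x hx).symm
    · right; simpa using hx

set_option maxHeartbeats 1600000 in
/-- K4: `s_a` and the `w`-conjugate of `s_c` generate an infinite group, when
`M a c = 0` and `w` is the alternating word in `s, t` (all four letters distinct). -/
lemma K4 {M : CoxeterMatrix B} (cs : CoxeterSystem M W) (s t a c : B)
    (hsa : s ≠ a) (hta : t ≠ a) (hca : c ≠ a) (hsc : s ≠ c) (htc : t ≠ c)
    (hMac : M a c = 0) (w : W)
    (hw : w = cs.wordProd (CoxeterSystem.alternatingWord s t (M s t))) :
    ¬ IsOfFinOrder (cs.simple a * (w * cs.simple c * w⁻¹)) := by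
  set m := M s t with hm
  set R : ℝ := 3^m with hRdef
  have hR1 : (1:ℝ) ≤ R := one_le_pow₀ (by norm_num)
  set k : B → B → ℝ :=
    fun x y => if (x = a ∧ y = c) ∨ (x = c ∧ y = a) then -(2*R) else stdk M x y with hk
  have hknorm : ∀ x y, ¬((x = a ∧ y = c) ∨ (x = c ∧ y = a)) → k x y = stdk M x y :=
    fun x y h => if_neg h
  have hkspec : k a c = -(2*R) := if_pos (Or.inl ⟨rfl, rfl⟩)
  have hsymm : ∀ x y, k x y = k y x := by
    intro x y
    by_cases h : (x = a ∧ y = c) ∨ (x = c ∧ y = a)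
    · rw [show k x y = -(2*R) from if_pos h, show k y x = -(2*R) from if_pos (by tauto)]
    · rw [hknorm x y h, hknorm y x (by tauto), stdk_symm]
  have hdiag : ∀ x, k x x = 1 := by
    intro x
    rw [hknorm x x (by rintro (⟨rfl, rfl⟩ | ⟨rfl, rfl⟩) <;> exact hca rfl), stdk_diag]
  have hcompat : ∀ i j, i ≠ j → 2 ≤ M i j → k i j = -Real.cos (Real.pi / (M i j : ℝ)) := by
    intro i j hij h2
    rcases Classical.em ((i = a ∧ j = c) ∨ (i = c ∧ j = a)) with h | h
    · exfalso
      rcases h with ⟨rfl, rfl⟩ | ⟨rfl, rfl⟩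
      · rw [hMac] at h2; omega
      · rw [M.symmetric, hMac] at h2; omega
    · rw [hknorm i j h, stdk_compat M i j hij]
  have hb : ∀ x y, ¬((x = a ∧ y = c) ∨ (x = c ∧ y = a)) → |k x y| ≤ 1 := by
    intro x y h; rw [hknorm x y h]; exact stdk_bound M x y
  have hksc : |k s c| ≤ 1 := hb s c (by tauto)
  have hktc : |k t c| ≤ 1 := hb t c (by tauto)
  have hkst : |k s t| ≤ 1 := hb s t (by
    rintro (⟨rfl, rfl⟩ | ⟨rfl, rfl⟩)
    · exact htc rfl
    · exact hsc rfl)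
  have hkts : |k t s| ≤ 1 := by rw [hsymm t s]; exact hkst
  have hkas : |k a s| ≤ 1 := hb a s (by
    rintro (⟨-, rfl⟩ | ⟨rfl, -⟩)
    · exact hsc rfl
    · exact hca rfl)
  have hkat : |k a t| ≤ 1 := hb a t (by
    rintro (⟨-, rfl⟩ | ⟨rfl, -⟩)
    · exact htc rfl
    · exact hca rfl)
  obtain ⟨F, hF⟩ := exists_F cs k hsymm hdiag hcompat
  -- structure of `F (π ω) (e c)` for `{s,t}`-words `ω`
  have walk : ∀ ω : List B, (∀ x ∈ ω, x = s ∨ x = t) →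
      ∃ x y : ℝ, (F (cs.wordProd ω)) (Finsupp.single c (1:ℝ))
          = Finsupp.single c (1:ℝ) + x • Finsupp.single s (1:ℝ) + y • Finsupp.single t (1:ℝ)
        ∧ |x| + |y| ≤ 3^(ω.length) - 1 := by
    intro ω
    induction ω with
    | nil =>
      intro _
      refine ⟨0, 0, ?_, by norm_num⟩
      rw [cs.wordProd_nil, map_one, Module.End.one_apply]
      simp
    | cons hd tl ih =>
      intro hmem
      obtain ⟨x, y, hv, hbnd⟩ := ih (fun x hx => hmem x (List.mem_cons_of_mem hd hx))
      have hpow : (3:ℝ)^(hd :: tl).length = 3 * 3^tl.length := by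
        rw [List.length_cons, pow_succ]; ring
      have h3 : (1:ℝ) ≤ 3^tl.length := one_le_pow₀ (by norm_num)
      rw [cs.wordProd_cons, map_mul, Module.End.mul_apply, hv, hF hd]
      rcases hmem hd (List.mem_cons_self) with rfl | rfl
      · -- hd = s
        have hip : ip k hd (Finsupp.single c (1:ℝ) + x • Finsupp.single hd (1:ℝ)
              + y • Finsupp.single t (1:ℝ)) = k hd c + x + y * (k hd t) := by
          rw [map_add, map_add, map_smul, map_smul, ip_single, ip_single, ip_single,
            hdiag hd]
          simp only [smul_eq_mul]; ring
        refine ⟨x - 2*(k hd c + x + y * (k hd t)), y, ?_, ?_⟩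
        · rw [sigma_apply, hip]; module
        · have hz : |k hd c + x + y * (k hd t)| ≤ 1 + |x| + |y| := by
            calc |k hd c + x + y * (k hd t)| ≤ |k hd c + x| + |y * k hd t| := abs_add_le _ _
              _ ≤ |k hd c| + |x| + |y| * |k hd t| := by
                  rw [abs_mul]; exact add_le_add_left (abs_add_le _ _) _
              _ ≤ 1 + |x| + |y| := by
                  have : |y| * |k hd t| ≤ |y| * 1 :=
                    mul_le_mul_of_nonneg_left hkst (abs_nonneg y)
                  nlinarith [hksc]
          have h1 : |x - 2*(k hd c + x + y * (k hd t))|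
              ≤ |x| + 2*|k hd c + x + y * (k hd t)| := by
            calc |x - 2*(k hd c + x + y * (k hd t))|
                ≤ |x| + |2*(k hd c + x + y * (k hd t))| := abs_sub _ _
              _ = |x| + 2*|k hd c + x + y * (k hd t)| := by rw [abs_mul, abs_two]
          rw [hpow]
          nlinarith [hbnd]
      · -- hd = t
        have hip : ip k hd (Finsupp.single c (1:ℝ) + x • Finsupp.single s (1:ℝ)
              + y • Finsupp.single hd (1:ℝ)) = k hd c + x * (k hd s) + y := by
          rw [map_add, map_add, map_smul, map_smul, ip_single, ip_single, ip_single,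
            hdiag hd]
          simp only [smul_eq_mul]; ring
        refine ⟨x, y - 2*(k hd c + x * (k hd s) + y), ?_, ?_⟩
        · rw [sigma_apply, hip]; module
        · have hz : |k hd c + x * (k hd s) + y| ≤ 1 + |x| + |y| := by
            calc |k hd c + x * (k hd s) + y| ≤ |k hd c + x * (k hd s)| + |y| := abs_add_le _ _
              _ ≤ |k hd c| + |x| * |k hd s| + |y| := by
                  rw [← abs_mul]; exact add_le_add_left (abs_add_le _ _) _
              _ ≤ 1 + |x| + |y| := by
                  have : |x| * |k hd s| ≤ |x| * 1 :=
                    mul_le_mul_of_nonneg_left hkts (abs_nonneg x)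
                  nlinarith [hktc]
          have h1 : |y - 2*(k hd c + x * (k hd s) + y)|
              ≤ |y| + 2*|k hd c + x * (k hd s) + y| := by
            calc |y - 2*(k hd c + x * (k hd s) + y)|
                ≤ |y| + |2*(k hd c + x * (k hd s) + y)| := abs_sub _ _
              _ = |y| + 2*|k hd c + x * (k hd s) + y| := by rw [abs_mul, abs_two]
          rw [hpow]
          nlinarith [hbnd]
  obtain ⟨x, y, hβv, hβb⟩ := walk (CoxeterSystem.alternatingWord s t m)
    (fun x hx => mem_alternatingWord_cases m s t x hx)
  rw [CoxeterSystem.length_alternatingWord] at hβb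
  set β : V B := F w (Finsupp.single c (1:ℝ)) with hβ
  have hβv' : β = Finsupp.single c (1:ℝ) + x • Finsupp.single s (1:ℝ)
      + y • Finsupp.single t (1:ℝ) := by rw [hβ, hw]; exact hβv
  -- the key quantity
  have hκval : Qf k (Finsupp.single a (1:ℝ)) β = k a c + x * (k a s) + y * (k a t) := by
    rw [hβv', Qf_single_left, one_mul, map_add, map_add, map_smul, map_smul,
      ip_single, ip_single, ip_single]
    simp only [smul_eq_mul]; ring
  have hκ : 1 ≤ (Qf k (Finsupp.single a (1:ℝ)) β)^2 := by
    have hxa : |x * k a s| ≤ |x| := by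
      rw [abs_mul]
      calc |x| * |k a s| ≤ |x| * 1 := mul_le_mul_of_nonneg_left hkas (abs_nonneg x)
        _ = |x| := mul_one _
    have hya : |y * k a t| ≤ |y| := by
      rw [abs_mul]
      calc |y| * |k a t| ≤ |y| * 1 := mul_le_mul_of_nonneg_left hkat (abs_nonneg y)
        _ = |y| := mul_one _
    have h1 : Qf k (Finsupp.single a (1:ℝ)) β ≤ -(2*R) + (R - 1) := by
      rw [hκval, hkspec]
      have := abs_le.mp hxa
      have := abs_le.mp hya
      have := abs_le.mp (le_refl |x|)
      nlinarith [abs_nonneg x, abs_nonneg y, hβb, abs_le.mp hxa, abs_le.mp hya]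
    nlinarith [hR1]
  have hFw_inv : ∀ v : V B, F w (F w⁻¹ v) = v := by
    intro v
    have h1 : F w * F w⁻¹ = 1 := by rw [← map_mul, mul_inv_cancel, map_one]
    have := DFunLike.congr_fun h1 v
    rwa [Module.End.mul_apply, Module.End.one_apply] at this
  have hββ : Qf k β β = 1 := by
    rw [hβ, F_invar cs k hsymm hdiag F hF w, Qf_single_left, one_mul, ip_single,
      one_mul, hdiag]
  set rB : Module.End ℝ (V B) := F w * sigma k c * F w⁻¹ with hrBdef
  have hrB : ∀ v, rB v = v - (2 * Qf k β v) • β := by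
    intro v
    have e0 : rB v = F w (sigma k c (F w⁻¹ v)) := rfl
    have e1 : ip k c (F w⁻¹ v) = Qf k β v := by
      rw [show ip k c (F w⁻¹ v) = Qf k (Finsupp.single c (1:ℝ)) (F w⁻¹ v) from by
        rw [Qf_single_left, one_mul]]
      rw [← F_invar cs k hsymm hdiag F hF w (Finsupp.single c (1:ℝ)) (F w⁻¹ v),
        hFw_inv, ← hβ]
    rw [e0, sigma_apply, map_sub, map_smul, hFw_inv, e1, hβ]
  intro hfin
  obtain ⟨n, hn, hpow⟩ := isOfFinOrder_iff_pow_eq_one.mp hfin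
  have hEnd : (sigma k a * rB)^n = 1 := by
    have : F (cs.simple a * (w * cs.simple c * w⁻¹)) = sigma k a * rB := by
      rw [map_mul, map_mul, map_mul, hF a, hF c, hrBdef]
    rw [← this, ← map_pow, hpow, map_one]
  have hcore := core_infinite k hsymm (sigma k a) rB (Finsupp.single a (1:ℝ)) β
    (sigma_as_refl k a) hrB
    (by rw [Qf_single_left, one_mul, ip_single, one_mul, hdiag])
    hββ hκ a Finsupp.single_eq_same
    (by rw [hβv']
        simp [Finsupp.single_eq_of_ne' hca, Finsupp.single_eq_of_ne' hsa,
          Finsupp.single_eq_of_ne' hta])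
    (n - 1)
  rw [Nat.sub_add_cancel hn] at hcore
  exact hcore hEnd

end

end CoxTwistAux

set_option maxHeartbeats 2000000

/-- Let `τ` be the elementary twist of the 3-rigid Coxeter generating set `S` of type
FC performed with respect to `J = {s,t}` with `m_{st}` odd, conjugating the part `B₀`
by the longest element `w_{st}` of `⟨s,t⟩`. Let `L` be a maximal irreducible subset of
a maximal spherical subset of `S`, with `|L| = 3`, `L` exposed, and
`L ⊆ A ∪ {s,t} ∪ {s,t}^⊥` (so that `L_τ = L`). Then `L_τ` is exposed in `τ(S)`; in
particular, if `{s,t} ∩ L = ∅` then `(L_τ)^⊥` in `τ(S)` equals `τ(L^⊥)`. -/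
theorem exposed_stays_exposed_under_dihedral_twist
    (M : CoxeterMatrix B) (cs : CoxeterSystem M W)
    (hFC : IsFC cs) (hrig : ThreeRigidIdx M)
    (s t : B) (hst : s ≠ t) (hodd : Odd (M s t))
    (A B₀ : Set B)
    (hunion : A ∪ B₀ = (({s, t} : Set B) ∪ perpIdx M {s, t})ᶜ)
    (hdisj : A ∩ B₀ = ∅)
    (hnoedge : ∀ a ∈ A, ∀ b ∈ B₀, M a b = 0)
    -- the longest element of `⟨s,t⟩` and the elementary twist `τ`
    (wst : W) (hwst : wst = cs.wordProd (CoxeterSystem.alternatingWord s t (M s t)))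
    (τ : B → W)
    (hτ : τ = fun b => if b ∈ B₀ then wst * cs.simple b * wst⁻¹ else cs.simple b)
    -- `L` is a maximal irreducible subset of a maximal spherical subset `Lmax` of `S`
    (L Lmax : Set B)
    (hLmaxsph : SphericalIdx cs Lmax)
    (hLmaxmax : ∀ T : Set B, SphericalIdx cs T → Lmax ⊆ T → T = Lmax)
    (hLsub : L ⊆ Lmax) (hLirr : IrredIdx M L)
    (hLmaxirr : ∀ L' : Set B, L ⊆ L' → L' ⊆ Lmax → IrredIdx M L' → L' = L)
    (hL3 : L.ncard = 3) (hLexp : ExposedIdx M L)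
    (hLA : L ⊆ A ∪ ({s, t} : Set B) ∪ perpIdx M {s, t}) :
    ExposedW (Set.range τ) (τ '' L) ∧
      (s ∉ L → t ∉ L → perpW (Set.range τ) (τ '' L) = τ '' perpIdx M L) := by
  classical
  open CoxTwistAux in
  -- basic numerology
  have hMst1 : M s t ≠ 1 := M.off_diagonal s t hst
  obtain ⟨r, hr⟩ := hodd
  have hm3 : 3 ≤ M s t := by omega
  -- dihedral group identities
  set p := cs.simple s with hp
  set q := cs.simple t with hq
  have hpp : p * p = 1 := cs.simple_mul_simple_self s
  have hqq : q * q = 1 := cs.simple_mul_simple_self t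
  have hrel : (p * q) ^ (M s t) = 1 := cs.simple_mul_simple_pow s t
  have hpinv : p⁻¹ = p := cs.inv_simple s
  have hqinv : q⁻¹ = q := cs.inv_simple t
  have hwprod : wst = q * (p * q) ^ r := by
    have hnE : ¬ Even (M s t) := by rw [Nat.even_iff]; omega
    rw [hwst, cs.prod_alternatingWord_eq_mul_pow, if_neg hnE,
      show M s t / 2 = r by omega]
  have hpq_inv : ((p * q) ^ r)⁻¹ = (q * p) ^ r := by
    rw [← inv_pow, mul_inv_rev, hpinv, hqinv]
  have hr1 : (p * q) ^ (r + 1) = (q * p) ^ r := by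
    have h1 : (p * q) ^ (r + 1) * (p * q) ^ r = 1 := by
      rw [← pow_add]
      rw [show r + 1 + r = M s t by omega]
      exact hrel
    have h2 := eq_inv_of_mul_eq_one_left h1
    rw [hpq_inv] at h2
    exact h2
  have L1 : q * (p * q) ^ r * q = (q * p) ^ r := by
    have l0 : q * (p * q) * q⁻¹ = q * p := by
      rw [hqinv]
      calc q * (p * q) * q = q * p * (q * q) := by group
        _ = q * p := by rw [hqq, mul_one]
    have hh : (q * (p * q) * q⁻¹) ^ r = q * (p * q) ^ r * q⁻¹ := conj_pow
    rw [l0, hqinv] at hh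
    exact hh.symm
  have L1' : q * (q * p) ^ r * q = (p * q) ^ r := by
    have l0 : q * (q * p) * q⁻¹ = p * q := by
      rw [hqinv]
      calc q * (q * p) * q = (q * q) * (p * q) := by group
        _ = p * q := by rw [hqq, one_mul]
    have hh : (q * (q * p) * q⁻¹) ^ r = q * (q * p) ^ r * q⁻¹ := conj_pow
    rw [l0, hqinv] at hh
    exact hh.symm
  have hww : wst * wst = 1 := by
    rw [hwprod]
    calc q * (p * q) ^ r * (q * (p * q) ^ r)
        = (q * (p * q) ^ r * q) * (p * q) ^ r := by group
      _ = (q * p) ^ r * (p * q) ^ r := by rw [L1]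
      _ = ((p * q) ^ r)⁻¹ * (p * q) ^ r := by rw [hpq_inv]
      _ = 1 := inv_mul_cancel _
  have hwinv : wst⁻¹ = wst := inv_eq_of_mul_eq_one_right hww
  have I1 : (p * q) ^ r * p = (q * p) ^ r * q := by
    have h := hr1
    rw [pow_succ] at h
    calc (p * q) ^ r * p = ((p * q) ^ r * (p * q)) * q := by
          rw [show (p*q)^r * (p*q) * q = (p*q)^r * p * (q*q) from by group, hqq, mul_one]
      _ = (q * p) ^ r * q := by rw [h]
  have hwp : wst * p = q * wst := by
    rw [hwprod]
    calc q * (p * q) ^ r * p = q * ((q * p) ^ r * q) := by rw [mul_assoc, I1]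
      _ = q * (q * p) ^ r * q := by rw [mul_assoc]
      _ = (p * q) ^ r := L1'
      _ = (q * q) * (p * q) ^ r := by rw [hqq, one_mul]
      _ = q * (q * (p * q) ^ r) := by group
  have hwq : wst * q = p * wst := by
    rw [hwprod]
    calc q * (p * q) ^ r * q = (q * p) ^ r := L1
      _ = (p * q) ^ (r + 1) := hr1.symm
      _ = p * (q * (p * q) ^ r) := by rw [pow_succ']; group
  -- commuting helpers
  have hcomm2 : ∀ i j : B, M i j = 2 → Commute (cs.simple i) (cs.simple j) := by
    intro i j h2
    have h := cs.simple_mul_simple_pow i j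
    rw [h2, pow_two] at h
    have hinv1 := inv_eq_of_mul_eq_one_right h
    have hinv2 : (cs.simple i * cs.simple j)⁻¹ = cs.simple j * cs.simple i := by
      rw [mul_inv_rev, cs.inv_simple, cs.inv_simple]
    show cs.simple i * cs.simple j = cs.simple j * cs.simple i
    rw [← hinv2, hinv1]
  have hPmem : ∀ u, u ∈ perpIdx M {s, t} → u ≠ s ∧ u ≠ t ∧ M u s = 2 ∧ M u t = 2 := by
    intro u hu
    obtain ⟨hu1, hu2⟩ := hu
    refine ⟨?_, ?_, hu2 s (by simp), hu2 t (by simp)⟩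
    · intro h; exact hu1 (by simp [h])
    · intro h; exact hu1 (by simp [h])
  have hcommw : ∀ u, u ∈ perpIdx M {s, t} → Commute (cs.simple u) wst := by
    intro u hu
    obtain ⟨-, -, hus, hut⟩ := hPmem u hu
    have h1 : Commute (cs.simple u) p := hcomm2 u s hus
    have h2 : Commute (cs.simple u) q := hcomm2 u t hut
    rw [hwprod]
    exact h2.mul_right ((h1.mul_right h2).pow_right r)
  have hfoconj : ∀ (g x : W), IsOfFinOrder (g * x * g⁻¹) ↔ IsOfFinOrder x := by
    intro g x
    constructor <;> intro h <;>
      obtain ⟨n, hn, hpw⟩ := isOfFinOrder_iff_pow_eq_one.mp h <;>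
      rw [isOfFinOrder_iff_pow_eq_one]
    · refine ⟨n, hn, ?_⟩
      rw [conj_pow] at hpw
      have h2 : x ^ n = g⁻¹ * (g * x ^ n * g⁻¹) * g := by group
      rw [hpw] at h2
      rw [h2]; group
    · exact ⟨n, hn, by rw [conj_pow, hpw]; group⟩
  have hconjcomm : ∀ x y : W, Commute (wst * x * wst⁻¹) (wst * y * wst⁻¹) → Commute x y := by
    intro x y h
    have h' := h.map (MulAut.conj wst⁻¹).toMonoidHom
    have e : ∀ z : W, (MulAut.conj wst⁻¹).toMonoidHom (wst * z * wst⁻¹) = z := by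
      intro z
      simp only [MulEquiv.toMonoidHom_eq_coe, MonoidHom.coe_coe, MulAut.conj_apply, inv_inv]
      group
    rwa [e, e] at h'
  -- membership bookkeeping
  have hAB : ∀ x, x ∈ A → x ∉ B₀ := by
    intro x hx hx'
    have : x ∈ A ∩ B₀ := ⟨hx, hx'⟩
    rw [hdisj] at this
    exact this
  have hB₀co : ∀ x, x ∈ B₀ → x ∉ ({s, t} : Set B) ∧ x ∉ perpIdx M {s, t} := by
    intro x hx
    have : x ∈ (({s, t} : Set B) ∪ perpIdx M {s, t})ᶜ := hunion ▸ Set.mem_union_right A hx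
    rw [Set.mem_compl_iff, Set.mem_union] at this
    exact ⟨fun h => this (Or.inl h), fun h => this (Or.inr h)⟩
  have hACo : ∀ x, x ∈ A → x ∉ ({s, t} : Set B) ∧ x ∉ perpIdx M {s, t} := by
    intro x hx
    have : x ∈ (({s, t} : Set B) ∪ perpIdx M {s, t})ᶜ := hunion ▸ Set.mem_union_left B₀ hx
    rw [Set.mem_compl_iff, Set.mem_union] at this
    exact ⟨fun h => this (Or.inl h), fun h => this (Or.inr h)⟩
  have hcoAB : ∀ x : B, x ∉ ({s, t} : Set B) → x ∉ perpIdx M {s, t} → x ∈ A ∨ x ∈ B₀ := by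
    intro x h1 h2
    have : x ∈ A ∪ B₀ := by
      rw [hunion, Set.mem_compl_iff, Set.mem_union]
      tauto
    exact this
  have hLloc : ∀ l ∈ L, l ∈ A ∨ l = s ∨ l = t ∨ l ∈ perpIdx M {s, t} := by
    intro l hl
    have := hLA hl
    simp only [Set.mem_union, Set.mem_insert_iff, Set.mem_singleton_iff] at this
    tauto
  have hLB₀ : ∀ l ∈ L, l ∉ B₀ := by
    intro l hl hlB
    obtain ⟨h1, h2⟩ := hB₀co l hlB
    rcases hLloc l hl with h | h | h | h
    · exact hAB l h hlB
    · exact h1 (by simp [h])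
    · exact h1 (by simp [h])
    · exact h2 h
  have hτn : ∀ b, b ∉ B₀ → τ b = cs.simple b := by
    intro b hb; rw [hτ]; exact if_neg hb
  have hτy : ∀ b, b ∈ B₀ → τ b = wst * cs.simple b * wst⁻¹ := by
    intro b hb; rw [hτ]; exact if_pos hb
  -- image and cardinality
  have himg : τ '' L = cs.simple '' L := Set.image_congr (fun l hl => hτn l (hLB₀ l hl))
  have hinj : Set.InjOn τ L := by
    intro x hx y hy hxy
    rw [hτn x (hLB₀ x hx), hτn y (hLB₀ y hy)] at hxy
    by_contra hne
    exact K3 cs x y hne hxy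
  have hncard : (τ '' L).ncard = 3 := by rw [Set.ncard_image_of_injOn hinj, hL3]
  -- exposedness witnesses
  rcases hLexp with h2 | ⟨-, a, ha, b, hb, hab, hEa, hEb⟩
  · rw [hL3] at h2; omega
  have hexp : ∀ x₀, (∀ kk, kk ∉ L ∪ perpIdx M L → ¬(x₀ ≠ kk ∧ M x₀ kk ≠ 0)) →
      ∀ c, c ∉ L ∪ perpIdx M L → c ≠ x₀ → M x₀ c = 0 := by
    intro x₀ hE c h1 h2
    rcases not_and_or.mp (hE c h1) with h | h
    · exact absurd (Ne.symm h2) h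
    · exact not_not.mp h
  have hEa' := hexp a hEa
  have hEb' := hexp b hEb
  clear hexp hEa hEb
  -- membership of perp elements in perpW
  have hPerpWmem : ∀ c, c ∉ B₀ → c ∈ perpIdx M L → τ c ∈ perpW (Set.range τ) (τ '' L) := by
    intro c hcB hcp
    obtain ⟨hcL, hc2⟩ := hcp
    refine ⟨Set.mem_range_self c, ?_, ?_⟩
    · rintro ⟨l, hl, hle⟩
      rw [hτn l (hLB₀ l hl), hτn c hcB] at hle
      exact CoxTwistAux.K3 cs l c (fun he => hcL (he ▸ hl)) hle
    · rintro u ⟨l, hl, rfl⟩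
      rw [hτn l (hLB₀ l hl), hτn c hcB]
      exact hcomm2 c l (hc2 l hl)
  have hPerpWmemB : L ⊆ perpIdx M {s, t} → ∀ c, c ∈ B₀ → c ∈ perpIdx M L →
      τ c ∈ perpW (Set.range τ) (τ '' L) := by
    intro hLP c hcB hcp
    obtain ⟨hcL, hc2⟩ := hcp
    have hslgen : ∀ l ∈ L, wst * cs.simple l * wst⁻¹ = cs.simple l := by
      intro l hl
      have hlw := hcommw l (hLP hl)
      rw [hwinv, ← hlw.eq, mul_assoc, hww, mul_one]
    refine ⟨Set.mem_range_self c, ?_, ?_⟩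
    · rintro ⟨l, hl, hle⟩
      rw [hτn l (hLB₀ l hl), hτy c hcB] at hle
      have h2 : cs.simple c = wst⁻¹ * cs.simple l * wst := by rw [hle]; group
      rw [hwinv] at h2
      have h3 := hslgen l hl
      rw [hwinv] at h3
      rw [h3] at h2
      exact CoxTwistAux.K3 cs c l (fun he => (hB₀co c hcB).2 (he ▸ hLP hl)) h2
    · rintro u ⟨l, hl, rfl⟩
      rw [hτn l (hLB₀ l hl), hτy c hcB, ← hslgen l hl]
      have := (hcomm2 c l (hc2 l hl)).map (MulAut.conj wst).toMonoidHom
      simpa [MulAut.conj_apply] using this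
  -- case 3: a perp element inside B₀
  have hcase3 : ∀ c, c ∈ B₀ → c ∈ perpIdx M L → τ c ∈ perpW (Set.range τ) (τ '' L) := by
    intro c hcB hcp
    have hc2 := hcp.2
    have hLnA : ∀ l ∈ L, l ∉ A := by
      intro l hl hlA
      have h0 := hnoedge l hlA c hcB
      have h2 := hc2 l hl
      rw [M.symmetric l c] at h0
      omega
    have hcJ := (hB₀co c hcB).1
    have hcP := (hB₀co c hcB).2
    have hLnJ : s ∉ L ∧ t ∉ L := by
      constructor
      · intro hsL
        have hcs := hc2 s hsL
        have hct : M c t ≠ 2 := by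
          intro h2t
          refine hcP ⟨hcJ, ?_⟩
          intro j hj
          rcases (by simpa using hj : j = s ∨ j = t) with rfl | rfl
          exacts [hcs, h2t]
        have htL : t ∉ L := fun htl => hct (hc2 t htl)
        have htperp : t ∉ perpIdx M L := by
          rintro ⟨-, hall⟩
          have := hall s hsL
          rw [M.symmetric t s] at this
          omega
        have hat := hEa' t (by rintro (h | h); exacts [htL h, htperp h])
          (fun he => htL (he ▸ ha))
        rcases hLloc a ha with h | rfl | rfl | h
        · exact (hLnA a ha) h
        · omega
        · exact htL ha
        · have := (hPmem a h).2.2.2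
          omega
      · intro htL
        have hcs := hc2 t htL
        have hsL : s ∉ L := by
          intro hsl
          have hcs' := hc2 s hsl
          refine hcP ⟨hcJ, ?_⟩
          intro j hj
          rcases (by simpa using hj : j = s ∨ j = t) with rfl | rfl
          exacts [hcs', hcs]
        have hsperp : s ∉ perpIdx M L := by
          rintro ⟨-, hall⟩
          have := hall t htL
          omega
        have hat := hEa' s (by rintro (h | h); exacts [hsL h, hsperp h])
          (fun he => hsL (he ▸ ha))
        rcases hLloc a ha with h | rfl | rfl | h
        · exact (hLnA a ha) h
        · exact hsL ha
        · rw [M.symmetric] at hat; omega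
        · have := (hPmem a h).2.2.1
          omega
    have hLP : L ⊆ perpIdx M {s, t} := by
      intro l hl
      rcases hLloc l hl with h | rfl | rfl | h
      · exact absurd h (hLnA l hl)
      · exact absurd hl hLnJ.1
      · exact absurd hl hLnJ.2
      · exact h
    exact hPerpWmemB hLP c hcB hcp
  -- the generic witness verifier
  have hWIT : ∀ x₀ ∈ L,
      (∀ c, c ∉ B₀ → c ∉ L ∪ perpIdx M L → ¬ IsOfFinOrder (cs.simple x₀ * cs.simple c)) →
      (∀ c, c ∈ B₀ → c ∉ L ∪ perpIdx M L →
        ¬ IsOfFinOrder (cs.simple x₀ * (wst * cs.simple c * wst⁻¹))) →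
      ∀ kk ∈ Set.range τ \ (τ '' L ∪ perpW (Set.range τ) (τ '' L)),
        ¬ IsOfFinOrder (τ x₀ * kk) := by
    intro x₀ hx₀ hout hin kk hkk
    obtain ⟨⟨c, rfl⟩, hk2⟩ := hkk
    rw [hτn x₀ (hLB₀ x₀ hx₀)]
    by_cases hcL : c ∈ L
    · exact absurd (Set.mem_union_left _ (Set.mem_image_of_mem τ hcL)) hk2
    by_cases hcp : c ∈ perpIdx M L
    · by_cases hcB : c ∈ B₀
      · exact absurd (Set.mem_union_right _ (hcase3 c hcB hcp)) hk2
      · exact absurd (Set.mem_union_right _ (hPerpWmem c hcB hcp)) hk2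
    by_cases hcB : c ∈ B₀
    · rw [hτy c hcB]
      exact hin c hcB (by rintro (h | h); exacts [hcL h, hcp h])
    · rw [hτn c hcB]
      exact hout c hcB (by rintro (h | h); exacts [hcL h, hcp h])
  have hgenout : ∀ x₀ ∈ L, (∀ c, c ∉ L ∪ perpIdx M L → c ≠ x₀ → M x₀ c = 0) →
      ∀ c, c ∉ B₀ → c ∉ L ∪ perpIdx M L → ¬ IsOfFinOrder (cs.simple x₀ * cs.simple c) := by
    intro x₀ hx₀ hE c hcB hcn
    have hne : x₀ ≠ c := by
      intro he
      rw [← he] at hcn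
      exact hcn (Set.mem_union_left _ hx₀)
    exact CoxTwistAux.K1 cs x₀ c hne (hE c hcn (Ne.symm hne))
  have hgenin : ∀ x₀ ∈ L, x₀ ≠ s → x₀ ≠ t → (∀ c, c ∉ L ∪ perpIdx M L → c ≠ x₀ → M x₀ c = 0) →
      ∀ c, c ∈ B₀ → c ∉ L ∪ perpIdx M L →
        ¬ IsOfFinOrder (cs.simple x₀ * (wst * cs.simple c * wst⁻¹)) := by
    intro x₀ hx₀ hxs hxt hE c hcB hcn
    have hxB : x₀ ∉ B₀ := hLB₀ x₀ hx₀
    have hne : x₀ ≠ c := fun he => hxB (he ▸ hcB)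
    have hcJ := (hB₀co c hcB).1
    have hsc : s ≠ c := fun he => hcJ (by simp [← he])
    have htc : t ≠ c := fun he => hcJ (by simp [← he])
    rcases hLloc x₀ hx₀ with h | rfl | rfl | h
    · exact CoxTwistAux.K4 cs s t x₀ c (Ne.symm hxs) (Ne.symm hxt) (Ne.symm hne) hsc htc
        (hnoedge x₀ h c hcB) wst hwst
    · exact absurd rfl hxs
    · exact absurd rfl hxt
    · have hxw := hcommw x₀ h
      have heq : cs.simple x₀ * (wst * cs.simple c * wst⁻¹)
          = wst * (cs.simple x₀ * cs.simple c) * wst⁻¹ := by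
        calc cs.simple x₀ * (wst * cs.simple c * wst⁻¹)
            = (cs.simple x₀ * wst) * cs.simple c * wst⁻¹ := by group
          _ = (wst * cs.simple x₀) * cs.simple c * wst⁻¹ := by rw [hxw.eq]
          _ = wst * (cs.simple x₀ * cs.simple c) * wst⁻¹ := by group
      rw [heq, hfoconj]
      exact CoxTwistAux.K1 cs x₀ c hne (hE c hcn (Ne.symm hne))
  have hJin : ∀ x₀ y₀ : B, (x₀ = s ∧ y₀ = t ∨ x₀ = t ∧ y₀ = s) →
      (∀ c, c ∈ B₀ → c ∉ L ∪ perpIdx M L → M y₀ c = 0) →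
      ∀ c, c ∈ B₀ → c ∉ L ∪ perpIdx M L →
        ¬ IsOfFinOrder (cs.simple x₀ * (wst * cs.simple c * wst⁻¹)) := by
    intro x₀ y₀ hxy H5 c hcB hcn
    have hswap : cs.simple x₀ * wst = wst * cs.simple y₀ := by
      rcases hxy with ⟨rfl, rfl⟩ | ⟨rfl, rfl⟩
      · rw [← hp, ← hq]; exact hwq.symm
      · rw [← hp, ← hq]; exact hwp.symm
    have hcJ := (hB₀co c hcB).1
    have hyc : y₀ ≠ c := by
      rcases hxy with ⟨-, rfl⟩ | ⟨-, rfl⟩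
      · exact fun he => hcJ (by simp [← he])
      · exact fun he => hcJ (by simp [← he])
    have heq : cs.simple x₀ * (wst * cs.simple c * wst⁻¹)
        = wst * (cs.simple y₀ * cs.simple c) * wst⁻¹ := by
      calc cs.simple x₀ * (wst * cs.simple c * wst⁻¹)
          = (cs.simple x₀ * wst) * cs.simple c * wst⁻¹ := by group
        _ = (wst * cs.simple y₀) * cs.simple c * wst⁻¹ := by rw [hswap]
        _ = wst * (cs.simple y₀ * cs.simple c) * wst⁻¹ := by group
    rw [heq, hfoconj]
    exact CoxTwistAux.K1 cs y₀ c hyc (H5 c hcB hcn)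
  -- the separation argument via 3-rigidity
  have hsep : perpIdx M {s, t} ⊆ L ∪ perpIdx M L → s ∈ L → t ∈ L →
      ∀ c₁, c₁ ∈ B₀ → c₁ ∉ L ∪ perpIdx M L →
      ∀ c₂, c₂ ∈ A → c₂ ∉ L ∪ perpIdx M L → False := by
    intro hPsub hsL htL c₁ hc₁B hc₁n c₂ hc₂A hc₂n
    have hLadj : ∀ x ∈ L, ∀ y ∈ L, x ≠ y → M x y ≠ 0 := by
      intro x hx y hy hxy h0
      apply CoxTwistAux.K1 cs x y hxy h0
      have hz : cs.simple x * cs.simple y ∈ Subgroup.closure (cs.simple '' Lmax) :=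
        mul_mem (Subgroup.subset_closure ⟨x, hLsub hx, rfl⟩)
          (Subgroup.subset_closure ⟨y, hLsub hy, rfl⟩)
      rw [← finite_powers]
      exact Set.Finite.subset hLmaxsph (by rintro z ⟨n, rfl⟩; exact pow_mem hz n)
    obtain ⟨-, -, hpath⟩ := hrig L hLadj hLirr (by rw [hL3]) c₂ c₁ hc₂n hc₁n
    have hstay : ∀ z, Relation.ReflTransGen
        (fun x y => x ∉ L ∪ perpIdx M L ∧ y ∉ L ∪ perpIdx M L ∧ x ≠ y ∧ M x y ≠ 0) c₂ z
        → z ∈ A := by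
      intro z hz
      induction hz with
      | refl => exact hc₂A
      | @tail x' y' _ hstep ih =>
        obtain ⟨hx1, hy1, hxy2, hM⟩ := hstep
        by_cases hy'J : y' ∈ ({s, t} : Set B)
        · exfalso
          rcases (by simpa using hy'J : y' = s ∨ y' = t) with rfl | rfl
          · exact hy1 (Set.mem_union_left _ hsL)
          · exact hy1 (Set.mem_union_left _ htL)
        by_cases hy'P : y' ∈ perpIdx M {s, t}
        · exact absurd (hPsub hy'P) hy1
        rcases hcoAB y' hy'J hy'P with h | h
        · exact h
        · exact absurd (hnoedge _ ih _ h) hM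
    exact hAB c₁ (hstay c₁ hpath) hc₁B
  -- the mixed-witness case, using rigidity
  have hMIX : ∀ x₀ y₀ u : B, (x₀ = s ∧ y₀ = t ∨ x₀ = t ∧ y₀ = s) → x₀ ∈ L → u ∈ L →
      u ≠ s → u ≠ t →
      (∀ c, c ∉ L ∪ perpIdx M L → c ≠ x₀ → M x₀ c = 0) →
      (∀ c, c ∉ L ∪ perpIdx M L → c ≠ u → M u c = 0) →
      ∃ a' ∈ τ '' L, ∃ b' ∈ τ '' L, a' ≠ b' ∧
        (∀ kk ∈ Set.range τ \ (τ '' L ∪ perpW (Set.range τ) (τ '' L)),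
          ¬ IsOfFinOrder (a' * kk)) ∧
        (∀ kk ∈ Set.range τ \ (τ '' L ∪ perpW (Set.range τ) (τ '' L)),
          ¬ IsOfFinOrder (b' * kk)) := by
    intro x₀ y₀ u hpair hx₀L huL hus hut hEx₀ hEu
    have hx₀y₀ : x₀ ≠ y₀ := by
      rcases hpair with ⟨rfl, rfl⟩ | ⟨rfl, rfl⟩
      exacts [hst, Ne.symm hst]
    have hx₀u : x₀ ≠ u := by
      rcases hpair with ⟨rfl, -⟩ | ⟨rfl, -⟩
      exacts [Ne.symm hus, Ne.symm hut]
    have hy₀L : y₀ ∈ L := by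
      by_contra hy₀n
      have hy₀p : y₀ ∉ perpIdx M L := by
        rintro ⟨-, hall⟩
        have := hall x₀ hx₀L
        rcases hpair with ⟨rfl, rfl⟩ | ⟨rfl, rfl⟩
        · rw [M.symmetric] at this; omega
        · omega
      have h0 := hEx₀ y₀ (by rintro (h | h); exacts [hy₀n h, hy₀p h]) (Ne.symm hx₀y₀)
      rcases hpair with ⟨rfl, rfl⟩ | ⟨rfl, rfl⟩
      · omega
      · rw [M.symmetric] at h0; omega
    have hsL : s ∈ L := by
      rcases hpair with ⟨rfl, rfl⟩ | ⟨rfl, rfl⟩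
      exacts [hx₀L, hy₀L]
    have htL : t ∈ L := by
      rcases hpair with ⟨rfl, rfl⟩ | ⟨rfl, rfl⟩
      exacts [hy₀L, hx₀L]
    have hPsub : perpIdx M {s, t} ⊆ L ∪ perpIdx M L := by
      intro z hz
      by_contra hzn
      obtain ⟨hzs, hzt, hzs2, hzt2⟩ := hPmem z hz
      have hzx : z ≠ x₀ := by
        rcases hpair with ⟨rfl, -⟩ | ⟨rfl, -⟩
        exacts [hzs, hzt]
      have h0 := hEx₀ z hzn hzx
      rw [M.symmetric] at h0
      rcases hpair with ⟨rfl, -⟩ | ⟨rfl, -⟩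
      · omega
      · omega
    by_cases hBC : ∃ c, c ∈ B₀ ∧ c ∉ L ∪ perpIdx M L
    · obtain ⟨c₁, hc₁B, hc₁n⟩ := hBC
      have hAsub : ∀ c₂, c₂ ∈ A → c₂ ∈ L ∪ perpIdx M L := by
        intro c₂ h
        by_contra hn
        exact hsep hPsub hsL htL c₁ hc₁B hc₁n c₂ h hn
      refine ⟨τ y₀, Set.mem_image_of_mem τ hy₀L, τ u, Set.mem_image_of_mem τ huL, ?_, ?_, ?_⟩
      · intro he
        have hy₀u : y₀ ≠ u := by
          rcases hpair with ⟨-, rfl⟩ | ⟨-, rfl⟩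
          exacts [Ne.symm hut, Ne.symm hus]
        exact hy₀u (hinj hy₀L huL he)
      · apply hWIT y₀ hy₀L
        · intro c hcB hcn
          exfalso
          by_cases hcJ : c ∈ ({s, t} : Set B)
          · rcases (by simpa using hcJ : c = s ∨ c = t) with rfl | rfl
            · exact hcn (Set.mem_union_left _ hsL)
            · exact hcn (Set.mem_union_left _ htL)
          by_cases hcP : c ∈ perpIdx M {s, t}
          · exact hcn (hPsub hcP)
          rcases hcoAB c hcJ hcP with h | h
          · exact hcn (hAsub c h)
          · exact hcB h
        · apply hJin y₀ x₀ (by tauto)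
          intro c hcB hcn
          exact hEx₀ c hcn (fun he => (hLB₀ x₀ hx₀L) (he ▸ hcB))
      · exact hWIT u huL (hgenout u huL hEu) (hgenin u huL hus hut hEu)
    · push_neg at hBC
      refine ⟨τ x₀, Set.mem_image_of_mem τ hx₀L, τ u, Set.mem_image_of_mem τ huL, ?_, ?_, ?_⟩
      · intro he; exact hx₀u (hinj hx₀L huL he)
      · apply hWIT x₀ hx₀L (hgenout x₀ hx₀L hEx₀)
        intro c hcB hcn
        exact absurd (hBC c hcB) hcn
      · exact hWIT u huL (hgenout u huL hEu) (hgenin u huL hus hut hEu)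
  constructor
  · -- `τ '' L` is exposed
    right
    refine ⟨hncard, ?_⟩
    by_cases haJ : a = s ∨ a = t <;> by_cases hbJ : b = s ∨ b = t
    · -- both witnesses in J
      have hpair : (a = s ∧ b = t) ∨ (a = t ∧ b = s) := by
        rcases haJ with rfl | rfl <;> rcases hbJ with h | h <;>
          first
            | (exact absurd h hab.symm)
            | tauto
      refine ⟨τ a, Set.mem_image_of_mem τ ha, τ b, Set.mem_image_of_mem τ hb, ?_, ?_, ?_⟩
      · intro he; exact hab (hinj ha hb he)
      · apply hWIT a ha (hgenout a ha hEa')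
        apply hJin a b hpair
        intro c hcB hcn
        exact hEb' c hcn (fun he => (hLB₀ b hb) (he ▸ hcB))
      · apply hWIT b hb (hgenout b hb hEb')
        apply hJin b a (by tauto)
        intro c hcB hcn
        exact hEa' c hcn (fun he => (hLB₀ a ha) (he ▸ hcB))
    · -- a ∈ J, b ∉ J
      push_neg at hbJ
      rcases haJ with rfl | rfl
      · exact hMIX a t b (Or.inl ⟨rfl, rfl⟩) ha hb hbJ.1 hbJ.2 hEa' hEb'
      · exact hMIX a s b (Or.inr ⟨rfl, rfl⟩) ha hb hbJ.1 hbJ.2 hEa' hEb'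
    · -- b ∈ J, a ∉ J
      push_neg at haJ
      rcases hbJ with rfl | rfl
      · exact hMIX b t a (Or.inl ⟨rfl, rfl⟩) hb ha haJ.1 haJ.2 hEb' hEa'
      · exact hMIX b s a (Or.inr ⟨rfl, rfl⟩) hb ha haJ.1 haJ.2 hEb' hEa'
    · -- both witnesses outside J
      push_neg at haJ
      push_neg at hbJ
      refine ⟨τ a, Set.mem_image_of_mem τ ha, τ b, Set.mem_image_of_mem τ hb, ?_, ?_, ?_⟩
      · intro he; exact hab (hinj ha hb he)
      · exact hWIT a ha (hgenout a ha hEa') (hgenin a ha haJ.1 haJ.2 hEa')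
      · exact hWIT b hb (hgenout b hb hEb') (hgenin b hb hbJ.1 hbJ.2 hEb')
  · -- the perp statement
    intro hsL htL
    have hLAP : ∀ l ∈ L, l ∈ A ∨ l ∈ perpIdx M {s, t} := by
      intro l hl
      rcases hLloc l hl with h | rfl | rfl | h
      · exact Or.inl h
      · exact absurd hl hsL
      · exact absurd hl htL
      · exact Or.inr h
    ext x
    constructor
    · rintro ⟨⟨c, rfl⟩, hnotim, hcomm⟩
      refine ⟨c, ⟨?_, ?_⟩, rfl⟩
      · intro hcL
        exact hnotim (Set.mem_image_of_mem τ hcL)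
      · intro l hl
        have hcomml := hcomm (τ l) (Set.mem_image_of_mem τ hl)
        rw [hτn l (hLB₀ l hl)] at hcomml
        have hcl : c ≠ l := by
          intro he
          exact hnotim (Set.mem_image_of_mem τ (he ▸ hl))
        by_cases hcB : c ∈ B₀
        · rcases hLAP l hl with hlA | hlP
          · exfalso
            rw [hτy c hcB] at hcomml
            have hlJ := (hACo l hlA).1
            have hcJ := (hB₀co c hcB).1
            apply CoxTwistAux.K4 cs s t l c
              (fun he => hlJ (by simp [← he])) (fun he => hlJ (by simp [← he]))
              (fun he => (hAB l hlA) (he ▸ hcB))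
              (fun he => hcJ (by simp [← he])) (fun he => hcJ (by simp [← he]))
              (hnoedge l hlA c hcB) wst hwst
            rw [isOfFinOrder_iff_pow_eq_one]
            refine ⟨2, by norm_num, ?_⟩
            have hτinv : (wst * cs.simple c * wst⁻¹) * (wst * cs.simple c * wst⁻¹) = 1 := by
              calc (wst * cs.simple c * wst⁻¹) * (wst * cs.simple c * wst⁻¹)
                  = wst * (cs.simple c * cs.simple c) * wst⁻¹ := by group
                _ = 1 := by rw [cs.simple_mul_simple_self]; group
            have hcm : cs.simple l * (wst * cs.simple c * wst⁻¹)
                = (wst * cs.simple c * wst⁻¹) * cs.simple l := (hcomml.symm).eq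
            rw [pow_two]
            calc cs.simple l * (wst * cs.simple c * wst⁻¹)
                  * (cs.simple l * (wst * cs.simple c * wst⁻¹))
                = cs.simple l * ((wst * cs.simple c * wst⁻¹) * cs.simple l)
                  * (wst * cs.simple c * wst⁻¹) := by group
              _ = cs.simple l * (cs.simple l * (wst * cs.simple c * wst⁻¹))
                  * (wst * cs.simple c * wst⁻¹) := by rw [← hcm]
              _ = (cs.simple l * cs.simple l)
                  * ((wst * cs.simple c * wst⁻¹) * (wst * cs.simple c * wst⁻¹)) := by group
              _ = 1 := by rw [cs.simple_mul_simple_self, hτinv, one_mul]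
          · rw [hτy c hcB] at hcomml
            have hlw := hcommw l hlP
            have hsl : wst * cs.simple l * wst⁻¹ = cs.simple l := by
              rw [hwinv, ← hlw.eq, mul_assoc, hww, mul_one]
            rw [← hsl] at hcomml
            exact CoxTwistAux.K2 cs c l hcl (hconjcomm _ _ hcomml)
        · rw [hτn c hcB] at hcomml
          exact CoxTwistAux.K2 cs c l hcl hcomml
    · rintro ⟨c, hcp, rfl⟩
      by_cases hcB : c ∈ B₀
      · have hLP : L ⊆ perpIdx M {s, t} := by
          intro l hl
          rcases hLAP l hl with h | h
          · exfalso
            have h0 := hnoedge l h c hcB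
            have h2 := hcp.2 l hl
            rw [M.symmetric l c] at h0
            omega
          · exact h
        exact hPerpWmemB hLP c hcB hcp
      · exact hPerpWmem c hcB hcp
end
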